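/- arXiv:math/0611909 — 6 statements merged into one kernel-verified Lean document; each statement's English description precedes it below -/
import Mathlib

section
/- Let n ≥ 2 be an integer, a > 0 and b ∈ ℝ with |b| < 1. Then there exists a unique C² function f : ℝ → ℝ, defined on all of ℝ, satisfying f''(t) = f(t)^{n-1} · (1 − f'(t)²)^{(n+2)/2} for all t ∈ ℝ together with f(0) = a and f'(0) = b; moreover this solution satisfies |f'(t)| < 1 for every t ∈ ℝ (i.e. it is a global spacelike solution). -/
open Real Filter

noncomputable section StmtAux

open Set NNReal Topology




/-- `qq s = √(1+s²)`. -/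
def qq (s : ℝ) : ℝ := Real.sqrt (1 + s ^ 2)

lemma qq_pos (s : ℝ) : 0 < qq s := Real.sqrt_pos.2 (by positivity)

lemma one_le_qq (s : ℝ) : 1 ≤ qq s := by
  rw [qq]
  nlinarith [Real.sq_sqrt (show (0:ℝ) ≤ 1 + s ^ 2 by positivity),
    Real.sqrt_nonneg (1 + s ^ 2), sq_nonneg s, sq_nonneg (Real.sqrt (1 + s ^ 2) - 1)]

lemma sq_qq (s : ℝ) : qq s ^ 2 = 1 + s ^ 2 := Real.sq_sqrt (by positivity)

lemma abs_lt_qq (s : ℝ) : |s| < qq s := by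
  have h1 : |s| = Real.sqrt (s ^ 2) := (Real.sqrt_sq_eq_abs s).symm
  rw [h1, qq]
  exact Real.sqrt_lt_sqrt (by positivity) (by linarith)

lemma hasDerivAt_qq (s : ℝ) : HasDerivAt qq (s / qq s) s := by
  have h1 : HasDerivAt (fun s : ℝ => 1 + s ^ 2) (2 * s) s := by
    simpa using ((hasDerivAt_pow 2 s).const_add 1)
  have h2 := (Real.hasDerivAt_sqrt (x := 1 + s ^ 2) (by positivity)).comp s h1
  refine h2.congr_deriv (Eq.symm ?_)
  simp only [qq]
  field_simp

/-- `phi1 s = s/√(1+s²)`, i.e. `tanh` in disguise. -/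
def phi1 (s : ℝ) : ℝ := s / qq s

lemma abs_phi1_lt_one (s : ℝ) : |phi1 s| < 1 := by
  rw [phi1, abs_div, abs_of_pos (qq_pos s), div_lt_one (qq_pos s)]
  exact abs_lt_qq s

lemma abs_phi1_le_one (s : ℝ) : |phi1 s| ≤ 1 := (abs_phi1_lt_one s).le

lemma one_sub_phi1_sq (s : ℝ) : 1 - phi1 s ^ 2 = ((qq s) ^ 2)⁻¹ := by
  have h := sq_qq s
  have h0 := (qq_pos s).ne'
  rw [phi1]
  field_simp
  linarith

lemma hasDerivAt_phi1 (s : ℝ) : HasDerivAt phi1 ((qq s ^ 3)⁻¹) s := by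
  have h0 := (qq_pos s).ne'
  have h := (hasDerivAt_id s).div (hasDerivAt_qq s) h0
  refine h.congr_deriv (Eq.symm ?_)
  have h2 := sq_qq s
  have e : (1:ℝ) * qq s - id s * (s / qq s) = 1 / qq s := by
    field_simp
    simp only [id_eq]
    nlinarith
  rw [e]
  field_simp

lemma continuous_qq : Continuous qq :=
  Real.continuous_sqrt.comp (by continuity)

lemma continuous_phi1 : Continuous phi1 :=
  continuous_id.div continuous_qq fun s => (qq_pos s).ne'

lemma lipschitz_phi1 : LipschitzWith 1 phi1 := by
  apply lipschitzWith_of_nnnorm_deriv_le (fun s => (hasDerivAt_phi1 s).differentiableAt)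
  intro s
  rw [(hasDerivAt_phi1 s).deriv]
  rw [← NNReal.coe_le_coe]
  push_cast
  rw [Real.norm_eq_abs, abs_inv, abs_of_pos (pow_pos (qq_pos s) 3)]
  rw [inv_le_one_iff₀]
  right
  exact one_le_pow₀ (one_le_qq s)





/-- `BB m s = (1+s²)^{-m/2}`. -/
def BB (m : ℕ) (s : ℝ) : ℝ := (qq s ^ m)⁻¹

lemma BB_pos (m : ℕ) (s : ℝ) : 0 < BB m s := by
  have := qq_pos s; rw [BB]; positivity

lemma BB_le_one (m : ℕ) (s : ℝ) : BB m s ≤ 1 := by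
  rw [BB, inv_le_one_iff₀]
  right
  exact one_le_pow₀ (one_le_qq s)

lemma abs_BB_le_one (m : ℕ) (s : ℝ) : |BB m s| ≤ 1 := by
  rw [abs_of_pos (BB_pos m s)]; exact BB_le_one m s

lemma hasDerivAt_BB (m : ℕ) (s : ℝ) :
    HasDerivAt (BB m) (-(↑m * qq s ^ (m - 1) * (s / qq s)) / (qq s ^ m) ^ 2) s := by
  have h1 : HasDerivAt (fun s => qq s ^ m) (↑m * qq s ^ (m - 1) * (s / qq s)) s :=
    (hasDerivAt_qq s).pow m
  exact h1.inv (pow_ne_zero m (qq_pos s).ne')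

lemma continuous_BB (m : ℕ) : Continuous (BB m) :=
  (continuous_qq.pow m).inv₀ fun s => pow_ne_zero m (qq_pos s).ne'

lemma lipschitz_BB (m : ℕ) : LipschitzWith m (BB m) := by
  apply lipschitzWith_of_nnnorm_deriv_le (fun s => (hasDerivAt_BB m s).differentiableAt)
  intro s
  rw [(hasDerivAt_BB m s).deriv, ← NNReal.coe_le_coe]
  push_cast
  have hq := qq_pos s
  have h1 : (1:ℝ) ≤ qq s := one_le_qq s
  rw [Real.norm_eq_abs, abs_div, abs_neg, abs_of_pos (by positivity : (0:ℝ) < (qq s ^ m) ^ 2),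
    abs_mul, abs_mul, abs_div]
  have hsq : |s| / |qq s| ≤ 1 := by
    rw [abs_of_pos hq, div_le_one hq]
    exact (abs_lt_qq s).le
  have habs : |(m:ℝ)| = (m:ℝ) := abs_of_nonneg (Nat.cast_nonneg m)
  have hqp : |qq s ^ (m-1)| = qq s ^ (m-1) := abs_of_pos (pow_pos hq _)
  rw [habs, hqp, div_le_iff₀ (by positivity)]
  have h2 : qq s ^ (m - 1) ≤ (qq s ^ m) ^ 2 := by
    rw [← pow_mul]
    exact pow_le_pow_right₀ h1 (by omega)
  calc (m:ℝ) * qq s ^ (m-1) * (|s| / |qq s|) ≤ (m:ℝ) * qq s ^ (m-1) * 1 := by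
        apply mul_le_mul_of_nonneg_left hsq (by positivity)
    _ = (m:ℝ) * qq s ^ (m-1) := by ring
    _ ≤ (m:ℝ) * (qq s ^ m) ^ 2 := by
        apply mul_le_mul_of_nonneg_left h2 (by positivity)
    _ = (m:ℝ) * (qq s ^ m) ^ 2 := rfl

/-- clamp to `[-M, M]` -/
def cl (M x : ℝ) : ℝ := max (-M) (min x M)

lemma lipschitz_cl (M : ℝ) : LipschitzWith 1 (cl M) :=
  (LipschitzWith.id.min_const M).const_max (-M)

lemma abs_cl_le {M : ℝ} (hM : 0 ≤ M) (x : ℝ) : |cl M x| ≤ M := by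
  rw [abs_le, cl]
  constructor
  · exact le_max_left _ _
  · apply max_le (by linarith) (min_le_right _ _)

lemma cl_eq_self {M x : ℝ} (h : |x| ≤ M) : cl M x = x := by
  rw [abs_le] at h
  rw [cl, min_eq_left h.2, max_eq_right h.1]

lemma cl_mem_Icc {M : ℝ} (hM : 0 ≤ M) (x : ℝ) : cl M x ∈ Icc (-M) M := by
  have := abs_cl_le hM x
  rw [abs_le] at this
  exact this

/-- `AA m M f = (cl M f)^m` -/
def AA (m : ℕ) (M x : ℝ) : ℝ := cl M x ^ m

lemma abs_AA_le {M : ℝ} (hM : 0 ≤ M) (m : ℕ) (x : ℝ) : |AA m M x| ≤ M ^ m := by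
  rw [AA, abs_pow]
  exact pow_le_pow_left₀ (abs_nonneg _) (abs_cl_le hM x) m

lemma continuous_AA (m : ℕ) (M : ℝ) : Continuous (AA m M) := by
  apply Continuous.pow
  exact (continuous_const.max ((continuous_id.min continuous_const)))

lemma lipschitzOnWith_pow (m : ℕ) {M : ℝ} (hM : 0 ≤ M) :
    LipschitzOnWith (m * M.toNNReal ^ (m - 1)) (fun x : ℝ => x ^ m) (Icc (-M) M) := by
  apply (convex_Icc _ _).lipschitzOnWith_of_nnnorm_hasDerivWithin_le
    (f' := fun x => (m : ℝ) * x ^ (m - 1))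
  · intro x _
    exact (hasDerivAt_pow m x).hasDerivWithinAt
  · intro x hx
    rw [← NNReal.coe_le_coe]
    push_cast
    rw [Real.norm_eq_abs, abs_mul, abs_of_nonneg (Nat.cast_nonneg (α := ℝ) m), abs_pow,
      Real.coe_toNNReal _ hM]
    apply mul_le_mul_of_nonneg_left _ (Nat.cast_nonneg m)
    apply pow_le_pow_left₀ (abs_nonneg _) _ _
    rw [abs_le]
    exact hx

lemma lipschitz_AA (m : ℕ) {M : ℝ} (hM : 0 ≤ M) :
    LipschitzWith (m * M.toNNReal ^ (m - 1)) (AA m M) := by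
  rw [← lipschitzOnWith_univ]
  have h1 := (lipschitzOnWith_pow m hM).comp ((lipschitz_cl M).lipschitzOnWith (s := univ))
    (fun x _ => cl_mem_Icc hM x)
  rw [mul_one] at h1
  exact h1

/-- Product of bounded Lipschitz functions of the two coordinates. -/
lemma lipschitz_mul_prod {A B : ℝ → ℝ} {K₁ K₂ C₁ C₂ : ℝ≥0}
    (hA : LipschitzWith K₁ A) (hB : LipschitzWith K₂ B)
    (hCA : ∀ x, |A x| ≤ C₁) (hCB : ∀ x, |B x| ≤ C₂) :
    LipschitzWith (C₁ * K₂ + C₂ * K₁) (fun p : ℝ × ℝ => A p.1 * B p.2) := by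
  apply LipschitzWith.of_dist_le_mul
  intro p q
  have h1 : dist p.1 q.1 ≤ dist p q := by rw [Prod.dist_eq]; exact le_max_left _ _
  have h2 : dist p.2 q.2 ≤ dist p q := by rw [Prod.dist_eq]; exact le_max_right _ _
  have hA2 : |A p.1 - A q.1| ≤ ↑K₁ * dist p q := by
    have h := hA.dist_le_mul p.1 q.1
    rw [Real.dist_eq] at h
    exact h.trans (mul_le_mul_of_nonneg_left h1 K₁.coe_nonneg)
  have hB2 : |B p.2 - B q.2| ≤ ↑K₂ * dist p q := by
    have h := hB.dist_le_mul p.2 q.2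
    rw [Real.dist_eq] at h
    exact h.trans (mul_le_mul_of_nonneg_left h2 K₂.coe_nonneg)
  have d0 : (0:ℝ) ≤ dist p q := dist_nonneg
  rw [Real.dist_eq]
  push_cast
  calc |A p.1 * B p.2 - A q.1 * B q.2|
      = |A p.1 * (B p.2 - B q.2) + B q.2 * (A p.1 - A q.1)| := by ring_nf
    _ ≤ |A p.1 * (B p.2 - B q.2)| + |B q.2 * (A p.1 - A q.1)| := abs_add_le _ _
    _ = |A p.1| * |B p.2 - B q.2| + |B q.2| * |A p.1 - A q.1| := by rw [abs_mul, abs_mul]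
    _ ≤ ↑C₁ * (↑K₂ * dist p q) + ↑C₂ * (↑K₁ * dist p q) := by
        apply add_le_add
        · exact mul_le_mul (hCA p.1) hB2 (abs_nonneg _) C₁.coe_nonneg
        · exact mul_le_mul (hCB q.2) hA2 (abs_nonneg _) C₂.coe_nonneg
    _ = (↑C₁ * ↑K₂ + ↑C₂ * ↑K₁) * dist p q := by ring




/-- truncated vector field -/
def VF (m : ℕ) (M : ℝ) (p : ℝ × ℝ) : ℝ × ℝ := (phi1 p.2, AA m M p.1 * BB m p.2)

/-- true vector field -/
def VT (m : ℕ) (p : ℝ × ℝ) : ℝ × ℝ := (phi1 p.2, p.1 ^ m * BB m p.2)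

lemma qq_def (s : ℝ) : qq s = Real.sqrt (1 + s ^ 2) := rfl
lemma phi1_def (s : ℝ) : phi1 s = s / qq s := rfl
lemma BB_def (m : ℕ) (s : ℝ) : BB m s = (qq s ^ m)⁻¹ := rfl
lemma AA_def (m : ℕ) (M x : ℝ) : AA m M x = cl M x ^ m := rfl
lemma VT_def (m : ℕ) (p : ℝ × ℝ) : VT m p = (phi1 p.2, p.1 ^ m * BB m p.2) := rfl

lemma VF_eq_VT {m : ℕ} {M : ℝ} {p : ℝ × ℝ} (h : |p.1| ≤ M) : VF m M p = VT m p := by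
  rw [VF, VT, AA_def, cl_eq_self h]

lemma vf_lipschitz (m : ℕ) {M : ℝ} (hM : 0 ≤ M) : ∃ K : ℝ≥0, LipschitzWith K (VF m M) := by
  have h1 : LipschitzWith (1 * 1) (fun p : ℝ × ℝ => phi1 p.2) :=
    lipschitz_phi1.comp LipschitzWith.prod_snd
  have hCA : ∀ x, |AA m M x| ≤ (M.toNNReal ^ m : ℝ≥0) := by
    intro x
    rw [NNReal.coe_pow, Real.coe_toNNReal M hM]
    exact abs_AA_le hM m x
  have hCB : ∀ x, |BB m x| ≤ ((1 : ℝ≥0) : ℝ) := by simpa using abs_BB_le_one m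
  have h2 := lipschitz_mul_prod (lipschitz_AA m hM) (lipschitz_BB m) hCA hCB
  exact ⟨_, h1.prodMk h2⟩

lemma vf_norm_le (m : ℕ) {M : ℝ} (hM : 1 ≤ M) (p : ℝ × ℝ) : ‖VF m M p‖ ≤ M ^ m := by
  have h0 : (0:ℝ) ≤ M := by linarith
  rw [VF, Prod.norm_def]
  apply max_le
  · rw [Real.norm_eq_abs]
    exact (abs_phi1_le_one p.2).trans (one_le_pow₀ hM)
  · rw [Real.norm_eq_abs, abs_mul]
    calc |AA m M p.1| * |BB m p.2| ≤ M ^ m * 1 :=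
          mul_le_mul (abs_AA_le h0 m p.1) (abs_BB_le_one m p.2) (abs_nonneg _) (by positivity)
      _ = M ^ m := mul_one _

lemma exists_sol_Icc (m : ℕ) {M T : ℝ} (hM : 1 ≤ M) (hT : 0 < T) (x₀ : ℝ × ℝ) :
    ∃ X : ℝ → ℝ × ℝ, X 0 = x₀ ∧
      ∀ t ∈ Icc (-T) T, HasDerivWithinAt X (VF m M (X t)) (Icc (-T) T) t := by
  obtain ⟨K, hK⟩ := vf_lipschitz m (by linarith : (0:ℝ) ≤ M)
  have hT0 : (0:ℝ) ∈ Icc (-T) T := by constructor <;> linarith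
  have hM0 : (0:ℝ) ≤ M ^ m := pow_nonneg (by linarith) _
  have hpl : IsPicardLindelof (fun _ : ℝ => VF m M) (⟨0, hT0⟩ : Icc (-T) T) x₀
      (⟨M ^ m * T, mul_nonneg hM0 hT.le⟩ : ℝ≥0) 0 (⟨M ^ m, hM0⟩ : ℝ≥0) K :=
    { lipschitzOnWith := fun t _ => hK.lipschitzOnWith
      continuousOn := fun x _ => continuousOn_const
      norm_le := fun t _ x _ => vf_norm_le m hM x
      mul_max_le := by
        simp only [NNReal.coe_zero, sub_zero, zero_sub, neg_neg, max_self]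
        exact le_refl _ }
  exact hpl.exists_eq_forall_mem_Icc_hasDerivWithinAt₀

lemma sol_fst_bound {m : ℕ} {M T : ℝ} (hT : 0 < T) {x₀ : ℝ × ℝ} {X : ℝ → ℝ × ℝ}
    (hX0 : X 0 = x₀)
    (hX : ∀ t ∈ Icc (-T) T, HasDerivWithinAt X (VF m M (X t)) (Icc (-T) T) t)
    {t : ℝ} (ht : t ∈ Icc (-T) T) : |(X t).1 - x₀.1| ≤ |t| := by
  have hder : ∀ s ∈ Icc (-T) T,
      HasDerivWithinAt (fun u => (X u).1) (phi1 ((X s).2)) (Icc (-T) T) s := by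
    intro s hs
    have h := (ContinuousLinearMap.fst ℝ ℝ ℝ).hasFDerivAt.comp_hasDerivWithinAt s (hX s hs)
    exact h
  have h0 : (0:ℝ) ∈ Icc (-T) T := by constructor <;> linarith
  have := Convex.norm_image_sub_le_of_norm_hasDerivWithin_le (f := fun u => (X u).1)
    (f' := fun s => phi1 ((X s).2)) (C := 1) hder
    (fun s _ => by rw [Real.norm_eq_abs]; exact abs_phi1_le_one _) (convex_Icc _ _) h0 ht
  simp only [hX0] at this
  simpa using this

lemma exists_global (m : ℕ) (x₀ : ℝ × ℝ) :
    ∃ X : ℝ → ℝ × ℝ, X 0 = x₀ ∧ (∀ t, HasDerivAt X (VT m (X t)) t) ∧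
      ∀ t, |(X t).1| ≤ |x₀.1| + |t| := by
  have hM1 : ∀ k : ℕ, (1:ℝ) ≤ max 1 (|x₀.1| + (k+1)) := fun k => le_max_left _ _
  have hT : ∀ k : ℕ, (0:ℝ) < (k:ℝ) + 1 := fun k => by positivity
  choose Xs hXs0 hXs using fun k : ℕ =>
    exists_sol_Icc m (hM1 k) (hT k) x₀
  -- basic facts
  have mem_Ioo_iff : ∀ (k : ℕ) (t : ℝ), t ∈ Ioo (-((k:ℝ)+1)) ((k:ℝ)+1) ↔ |t| < (k:ℝ)+1 := by
    intro k t
    rw [abs_lt]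
    exact ⟨fun h => ⟨h.1, h.2⟩, fun h => ⟨h.1, h.2⟩⟩
  have bnd : ∀ (k : ℕ) (t : ℝ), t ∈ Icc (-((k:ℝ)+1)) ((k:ℝ)+1) →
      |(Xs k t).1| ≤ |x₀.1| + ((k:ℝ)+1) := by
    intro k t ht
    have h1 := sol_fst_bound (hT k) (hXs0 k) (hXs k) ht
    have h2 : |t| ≤ (k:ℝ)+1 := by
      rw [abs_le]; exact ⟨ht.1, ht.2⟩
    calc |(Xs k t).1| ≤ |(Xs k t).1 - x₀.1| + |x₀.1| := by
          have := abs_add_le ((Xs k t).1 - x₀.1) x₀.1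
          simpa using this
      _ ≤ |x₀.1| + ((k:ℝ)+1) := by linarith
  have der : ∀ (k : ℕ) (t : ℝ), t ∈ Ioo (-((k:ℝ)+1)) ((k:ℝ)+1) →
      HasDerivAt (Xs k) (VT m (Xs k t)) t := by
    intro k t ht
    have h1 := (hXs k t (Ioo_subset_Icc_self ht)).hasDerivAt (Icc_mem_nhds ht.1 ht.2)
    rwa [VF_eq_VT ((bnd k t (Ioo_subset_Icc_self ht)).trans (le_max_right _ _))] at h1
  have derF : ∀ (k k' : ℕ), k ≤ k' → ∀ (t : ℝ), t ∈ Ioo (-((k:ℝ)+1)) ((k:ℝ)+1) →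
      HasDerivAt (Xs k) (VF m (max 1 (|x₀.1| + ((k':ℝ)+1))) (Xs k t)) t := by
    intro k k' hkk' t ht
    have hb : |(Xs k t).1| ≤ max 1 (|x₀.1| + ((k':ℝ)+1)) := by
      refine (bnd k t (Ioo_subset_Icc_self ht)).trans ((le_max_right _ _).trans' ?_)
      have : (k:ℝ) ≤ (k':ℝ) := Nat.cast_le.2 hkk'
      linarith
    rw [VF_eq_VT hb]
    exact der k t ht
  have consist : ∀ (k k' : ℕ), k ≤ k' →
      EqOn (Xs k) (Xs k') (Ioo (-((k:ℝ)+1)) ((k:ℝ)+1)) := by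
    intro k k' hkk'
    obtain ⟨K, hK⟩ := vf_lipschitz m (by linarith [hM1 k'] : (0:ℝ) ≤ max 1 (|x₀.1| + ((k':ℝ)+1)))
    have hsub : Ioo (-((k:ℝ)+1)) ((k:ℝ)+1) ⊆ Ioo (-((k':ℝ)+1)) ((k':ℝ)+1) := by
      apply Ioo_subset_Ioo <;> · have : (k:ℝ) ≤ (k':ℝ) := Nat.cast_le.2 hkk'; linarith
    apply ODE_solution_unique_of_mem_Ioo (v := fun _ => VF m (max 1 (|x₀.1| + ((k':ℝ)+1))))
      (s := fun _ => univ) (fun _ _ => hK.lipschitzOnWith)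
      ((mem_Ioo_iff k 0).2 (by simpa using hT k))
    · exact fun t ht => ⟨derF k k' hkk' t ht, trivial⟩
    · intro t ht
      refine ⟨?_, trivial⟩
      have ht' := hsub ht
      exact (hXs k' t (Ioo_subset_Icc_self ht')).hasDerivAt (Icc_mem_nhds ht'.1 ht'.2)
    · rw [hXs0 k, hXs0 k']
  set X : ℝ → ℝ × ℝ := fun t => Xs ⌊|t|⌋₊ t with hXdef
  have key : ∀ (k : ℕ) (t : ℝ), |t| < (k:ℝ)+1 → X t = Xs k t := by
    intro k t hk
    have hj : |t| < (⌊|t|⌋₊:ℝ)+1 := Nat.lt_floor_add_one |t|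
    have h1 := consist ⌊|t|⌋₊ (max ⌊|t|⌋₊ k) (le_max_left _ _)
      ((mem_Ioo_iff _ t).2 hj)
    have h2 := consist k (max ⌊|t|⌋₊ k) (le_max_right _ _)
      ((mem_Ioo_iff _ t).2 hk)
    rw [hXdef]
    simp only
    rw [h1, h2]
  refine ⟨X, ?_, ?_, ?_⟩
  · have : X 0 = Xs 0 0 := key 0 0 (by norm_num)
    rw [this, hXs0]
  · intro t
    have hj : |t| < (⌊|t|⌋₊:ℝ)+1 := Nat.lt_floor_add_one |t|
    have hev : X =ᶠ[𝓝 t] Xs ⌊|t|⌋₊ := by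
      have hopen : IsOpen (Ioo (-((⌊|t|⌋₊:ℝ)+1)) ((⌊|t|⌋₊:ℝ)+1)) := isOpen_Ioo
      filter_upwards [hopen.mem_nhds ((mem_Ioo_iff _ t).2 hj)] with s hs
      exact key ⌊|t|⌋₊ s ((mem_Ioo_iff _ s).1 hs)
    have h1 := der ⌊|t|⌋₊ t ((mem_Ioo_iff _ t).2 hj)
    have h2 := (hev.hasDerivAt_iff).2 h1
    rwa [← key ⌊|t|⌋₊ t hj] at h2
  · intro t
    have hj : |t| < (⌊|t|⌋₊:ℝ)+1 := Nat.lt_floor_add_one |t|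
    have h1 := sol_fst_bound (hT ⌊|t|⌋₊) (hXs0 ⌊|t|⌋₊) (hXs ⌊|t|⌋₊)
      (Ioo_subset_Icc_self ((mem_Ioo_iff _ t).2 hj))
    rw [key ⌊|t|⌋₊ t hj]
    calc |(Xs ⌊|t|⌋₊ t).1| ≤ |(Xs ⌊|t|⌋₊ t).1 - x₀.1| + |x₀.1| := by
          have := abs_add_le ((Xs ⌊|t|⌋₊ t).1 - x₀.1) x₀.1
          simpa using this
      _ ≤ |x₀.1| + |t| := by linarith




/-- `sigma b = b/√(1-b²)`, the inverse of `phi1`. -/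
def sg (u : ℝ) : ℝ := u / Real.sqrt (1 - u ^ 2)

lemma sqrt_one_sub_pos {u : ℝ} (h : u ^ 2 < 1) : 0 < Real.sqrt (1 - u ^ 2) :=
  Real.sqrt_pos.2 (by linarith)

lemma sq_sqrt_one_sub {u : ℝ} (h : u ^ 2 < 1) : Real.sqrt (1 - u ^ 2) ^ 2 = 1 - u ^ 2 :=
  Real.sq_sqrt (by linarith)

lemma qq_sg {u : ℝ} (h : u ^ 2 < 1) : qq (sg u) = (Real.sqrt (1 - u ^ 2))⁻¹ := by
  set r := Real.sqrt (1 - u ^ 2) with hr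
  have hrpos := sqrt_one_sub_pos h
  have hrsq := sq_sqrt_one_sub h
  have hne : (1:ℝ) - u ^ 2 ≠ 0 := by nlinarith
  rw [qq_def, sg, ← hr, div_pow]
  have h1 : 1 + u ^ 2 / r ^ 2 = (r⁻¹) ^ 2 := by
    rw [inv_pow, hrsq]
    field_simp
    ring
  rw [h1, Real.sqrt_sq (inv_nonneg.2 hrpos.le)]

lemma phi1_sg {u : ℝ} (h : u ^ 2 < 1) : phi1 (sg u) = u := by
  have hrpos := sqrt_one_sub_pos h
  rw [phi1_def, qq_sg h, sg]
  field_simp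

lemma sg_phi1 (s : ℝ) : sg (phi1 s) = s := by
  have h0 := (qq_pos s).ne'
  rw [sg, one_sub_phi1_sq, phi1_def]
  rw [show ((qq s ^ 2)⁻¹ : ℝ) = (qq s)⁻¹ ^ 2 by rw [inv_pow]]
  rw [Real.sqrt_sq (inv_nonneg.2 (qq_pos s).le)]
  field_simp

lemma hasDerivAt_sg {u : ℝ} (h : u ^ 2 < 1) :
    HasDerivAt sg ((Real.sqrt (1 - u ^ 2) ^ 3)⁻¹) u := by
  set r := Real.sqrt (1 - u ^ 2) with hr
  have hrpos := sqrt_one_sub_pos h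
  have hrsq := sq_sqrt_one_sub h
  have h1 : HasDerivAt (fun u : ℝ => 1 - u ^ 2) (-(2 * u)) u := by
    simpa using ((hasDerivAt_pow 2 u).const_sub 1)
  have h2 : HasDerivAt (fun u : ℝ => Real.sqrt (1 - u ^ 2)) (1 / (2 * r) * (-(2 * u))) u :=
    (Real.hasDerivAt_sqrt (by nlinarith)).comp u h1
  have h3 := (hasDerivAt_id u).div h2 hrpos.ne'
  refine h3.congr_deriv (Eq.symm ?_)
  have e : (1 : ℝ) * r - id u * (1 / (2 * r) * (-(2 * u))) = r + u ^ 2 / r := by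
    simp only [id_eq]
    field_simp
    ring
  rw [e, eq_div_iff (pow_ne_zero 2 hrpos.ne'), ← hr]
  have hne : r ≠ 0 := hrpos.ne'
  have hr2 : r ^ 2 = 1 - u ^ 2 := by rw [hr]; exact hrsq
  field_simp
  linear_combination -hr2

lemma rpow_sq_half {x : ℝ} (hx : 0 ≤ x) (c : ℝ) : (x ^ 2) ^ (c / 2) = x ^ c := by
  rw [show ((x : ℝ) ^ 2) = x ^ (2:ℝ) by rw [Real.rpow_two], ← Real.rpow_mul hx]
  congr 1
  ring

lemma rpow_sq_inv_half {x : ℝ} (hx : 0 < x) (c : ℝ) : ((x ^ 2)⁻¹) ^ (c / 2) = (x ^ c)⁻¹ := by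
  rw [← inv_pow, rpow_sq_half (inv_nonneg.2 hx.le) c, Real.inv_rpow hx.le]


lemma hasDerivAt_fst_of {X : ℝ → ℝ × ℝ} {d : ℝ × ℝ} {t : ℝ} (h : HasDerivAt X d t) :
    HasDerivAt (fun s => (X s).1) d.1 t :=
  (ContinuousLinearMap.fst ℝ ℝ ℝ).hasFDerivAt.comp_hasDerivAt t h

lemma hasDerivAt_snd_of {X : ℝ → ℝ × ℝ} {d : ℝ × ℝ} {t : ℝ} (h : HasDerivAt X d t) :
    HasDerivAt (fun s => (X s).2) d.2 t :=
  (ContinuousLinearMap.snd ℝ ℝ ℝ).hasFDerivAt.comp_hasDerivAt t h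

theorem main_exist (n : ℕ) (hn : 2 ≤ n) (a b : ℝ) (hb : |b| < 1) :
    ∃ f : ℝ → ℝ,
      (ContDiff ℝ 2 f ∧ f 0 = a ∧ deriv f 0 = b ∧
        ∀ t : ℝ, deriv (deriv f) t
          = f t ^ (n - 1) * (1 - (deriv f t) ^ 2) ^ ((n + 2 : ℝ) / 2)) ∧
      (∀ t, |deriv f t| < 1) := by
  obtain ⟨X, hX0, hXd, hXb⟩ := exists_global (n - 1) (a, sg b)
  set f : ℝ → ℝ := fun t => (X t).1 with hf
  set w : ℝ → ℝ := fun t => (X t).2 with hw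
  have hb2 : b ^ 2 < 1 := by nlinarith [sq_abs b, abs_nonneg b]
  have hderf : ∀ t, HasDerivAt f (phi1 (w t)) t := by
    intro t
    have h := hasDerivAt_fst_of (hXd t)
    rwa [VT_def] at h
  have hderw : ∀ t, HasDerivAt w (f t ^ (n - 1) * BB (n - 1) (w t)) t := by
    intro t
    have h := hasDerivAt_snd_of (hXd t)
    rwa [VT_def] at h
  have hdf : deriv f = fun t => phi1 (w t) := funext fun t => (hderf t).deriv
  have hderf2 : ∀ t, HasDerivAt (fun s => phi1 (w s))
      ((qq (w t) ^ 3)⁻¹ * (f t ^ (n - 1) * BB (n - 1) (w t))) t :=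
    fun t => (hasDerivAt_phi1 (w t)).comp t (hderw t)
  have hddf : ∀ t, deriv (deriv f) t
      = (qq (w t) ^ 3)⁻¹ * (f t ^ (n - 1) * BB (n - 1) (w t)) := by
    intro t
    rw [hdf]
    exact (hderf2 t).deriv
  refine ⟨f, ⟨?_, ?_, ?_, ?_⟩, ?_⟩
  · -- ContDiff ℝ 2 f
    have hfd : Differentiable ℝ f := fun t => (hderf t).differentiableAt
    have hwd : Differentiable ℝ w := fun t => (hderw t).differentiableAt
    have hdfd : Differentiable ℝ (deriv f) := by
      rw [hdf]
      exact fun t => (hderf2 t).differentiableAt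
    have hc : Continuous (deriv (deriv f)) := by
      have h1 : deriv (deriv f)
          = fun t => (qq (w t) ^ 3)⁻¹ * (f t ^ (n - 1) * BB (n - 1) (w t)) := funext hddf
      rw [h1]
      have hqc : Continuous fun t => (qq (w t) ^ 3)⁻¹ :=
        ((continuous_qq.comp hwd.continuous).pow 3).inv₀
          fun t => pow_ne_zero _ (qq_pos _).ne'
      exact hqc.mul ((hfd.continuous.pow _).mul
        ((continuous_BB (n - 1)).comp hwd.continuous))
    rw [show (2 : WithTop ℕ∞) = 1 + 1 by norm_num, contDiff_succ_iff_deriv]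
    refine ⟨hfd, by simp, ?_⟩
    rw [contDiff_one_iff_deriv]
    exact ⟨hdfd, hc⟩
  · simp [hf, hX0]
  · rw [hdf]
    have hw0 : w 0 = sg b := by simp [hw, hX0]
    simp only [hw0]
    exact phi1_sg hb2
  · intro t
    have h1 : 1 - deriv f t ^ 2 = ((qq (w t)) ^ 2)⁻¹ := by
      rw [hdf]
      exact one_sub_phi1_sq (w t)
    have hq := qq_pos (w t)
    rw [hddf t, h1, show ((n : ℝ) + 2) / 2 = (((n + 2 : ℕ) : ℝ)) / 2 by push_cast; ring,
      rpow_sq_inv_half hq, Real.rpow_natCast, BB_def]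
    have h2 : qq (w t) ^ (n + 2) = qq (w t) ^ 3 * qq (w t) ^ (n - 1) := by
      rw [← pow_add]
      congr 1
      omega
    rw [h2]
    have hne : qq (w t) ≠ 0 := hq.ne'
    field_simp
  · intro t
    rw [hdf]
    exact abs_phi1_lt_one (w t)





/-- Lift of a scalar solution to a solution of the 2-dimensional system. -/
lemma lift_solution (n : ℕ) (hn : 2 ≤ n) (g : ℝ → ℝ) (hg : ContDiff ℝ 2 g)
    (hode : ∀ t : ℝ, deriv (deriv g) t
      = g t ^ (n - 1) * (1 - (deriv g t) ^ 2) ^ ((n + 2 : ℝ) / 2))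
    (hlt : ∀ t, |deriv g t| < 1) :
    ∀ t, HasDerivAt (fun t => (g t, sg (deriv g t))) (VT (n - 1) (g t, sg (deriv g t))) t := by
  have hgd : Differentiable ℝ g := hg.differentiable (by norm_num)
  have hgd2 : Differentiable ℝ (deriv g) := by
    have h := (contDiff_succ_iff_deriv
      (n := 1) (f := g)).1 (by rw [show ((1:WithTop ℕ∞) + 1) = 2 by norm_num]; exact hg)
    exact (h.2.2.differentiable (by norm_num))
  intro t
  set u := deriv g t with hu
  have hu2 : u ^ 2 < 1 := by nlinarith [sq_abs u, abs_nonneg u, hlt t]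
  set r := Real.sqrt (1 - u ^ 2) with hr
  have hrpos : 0 < r := sqrt_one_sub_pos hu2
  have hrsq : r ^ 2 = 1 - u ^ 2 := sq_sqrt_one_sub hu2
  have h1 : HasDerivAt g u t := (hgd t).hasDerivAt
  have h2 : HasDerivAt (fun t => sg (deriv g t)) ((r ^ 3)⁻¹ * deriv (deriv g) t) t :=
    (hasDerivAt_sg (u := deriv g t) hu2).comp t (hgd2 t).hasDerivAt
  have hsnd : (r ^ 3)⁻¹ * deriv (deriv g) t = g t ^ (n - 1) * BB (n - 1) (sg u) := by
    rw [hode t, BB_def, qq_sg hu2, ← hu, show ((n : ℝ) + 2) / 2 = (((n + 2 : ℕ) : ℝ)) / 2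
        by push_cast; ring, ← hrsq, rpow_sq_half hrpos.le, Real.rpow_natCast, Real.sqrt_sq hrpos.le]
    rw [inv_pow, inv_inv]
    have h3 : r ^ (n + 2) = r ^ 3 * r ^ (n - 1) := by
      rw [← pow_add]; congr 1; omega
    rw [h3]
    have hne : r ≠ 0 := hrpos.ne'
    field_simp
  have hZ := h1.prodMk (hsnd ▸ h2)
  rw [VT_def, phi1_sg hu2]
  exact hZ

/-- 1-Lipschitz bound for solutions. -/
lemma sol_abs_bound {g : ℝ → ℝ} {a : ℝ} (hgd : Differentiable ℝ g) (h0 : g 0 = a)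
    (hlt : ∀ t, |deriv g t| < 1) (t : ℝ) : |g t| ≤ |a| + |t| := by
  have hlip : LipschitzWith 1 g := by
    apply lipschitzWith_of_nnnorm_deriv_le hgd
    intro x
    rw [← NNReal.coe_le_coe]
    push_cast
    rw [Real.norm_eq_abs]
    exact (hlt x).le
  have h := hlip.dist_le_mul t 0
  rw [Real.dist_eq, Real.dist_eq, h0] at h
  push_cast at h
  calc |g t| ≤ |g t - a| + |a| := by
        have := abs_add_le (g t - a) a
        simpa using this
    _ ≤ |a| + |t| := by
        simp only [sub_zero] at h
        linarith

theorem uniq_sol (n : ℕ) (hn : 2 ≤ n) (a b : ℝ) (g₁ g₂ : ℝ → ℝ)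
    (hg₁ : ContDiff ℝ 2 g₁) (h0₁ : g₁ 0 = a) (h1₁ : deriv g₁ 0 = b)
    (hode₁ : ∀ t : ℝ, deriv (deriv g₁) t
      = g₁ t ^ (n - 1) * (1 - (deriv g₁ t) ^ 2) ^ ((n + 2 : ℝ) / 2))
    (hlt₁ : ∀ t, |deriv g₁ t| < 1)
    (hg₂ : ContDiff ℝ 2 g₂) (h0₂ : g₂ 0 = a) (h1₂ : deriv g₂ 0 = b)
    (hode₂ : ∀ t : ℝ, deriv (deriv g₂) t
      = g₂ t ^ (n - 1) * (1 - (deriv g₂ t) ^ 2) ^ ((n + 2 : ℝ) / 2))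
    (hlt₂ : ∀ t, |deriv g₂ t| < 1) :
    g₁ = g₂ := by
  have hZ₁ := lift_solution n hn g₁ hg₁ hode₁ hlt₁
  have hZ₂ := lift_solution n hn g₂ hg₂ hode₂ hlt₂
  have hb₁ := sol_abs_bound (hg₁.differentiable (by norm_num)) h0₁ hlt₁
  have hb₂ := sol_abs_bound (hg₂.differentiable (by norm_num)) h0₂ hlt₂
  funext t
  set k := ⌊|t|⌋₊ with hk
  have hjk : |t| < (k : ℝ) + 1 := Nat.lt_floor_add_one |t|
  set M := max 1 (|a| + ((k : ℝ) + 1)) with hM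
  obtain ⟨K, hK⟩ := vf_lipschitz (n - 1) (le_trans zero_le_one (le_max_left _ _) : (0:ℝ) ≤ M)
  have hbnd : ∀ (g : ℝ → ℝ), (∀ s, |g s| ≤ |a| + |s|) → ∀ s ∈ Ioo (-((k:ℝ)+1)) ((k:ℝ)+1),
      |g s| ≤ M := by
    intro g hb s hs
    have : |s| ≤ (k:ℝ) + 1 := by
      rw [abs_le]
      exact ⟨hs.1.le, hs.2.le⟩
    exact le_trans (hb s) (le_trans (by linarith) (le_max_right _ _))
  have heq : EqOn (fun t => (g₁ t, sg (deriv g₁ t))) (fun t => (g₂ t, sg (deriv g₂ t)))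
      (Ioo (-((k:ℝ)+1)) ((k:ℝ)+1)) := by
    apply ODE_solution_unique_of_mem_Ioo (v := fun _ => VF (n-1) M) (s := fun _ => univ)
      (fun _ _ => hK.lipschitzOnWith)
      (show (0:ℝ) ∈ Ioo (-((k:ℝ)+1)) ((k:ℝ)+1) by
        constructor
        · have : (0:ℝ) ≤ (k:ℝ) := Nat.cast_nonneg k
          linarith
        · have : (0:ℝ) ≤ (k:ℝ) := Nat.cast_nonneg k
          linarith)
    · intro s hs
      refine ⟨?_, trivial⟩
      rw [VF_eq_VT (hbnd g₁ hb₁ s hs)]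
      exact hZ₁ s
    · intro s hs
      refine ⟨?_, trivial⟩
      rw [VF_eq_VT (hbnd g₂ hb₂ s hs)]
      exact hZ₂ s
    · show (g₁ 0, sg (deriv g₁ 0)) = (g₂ 0, sg (deriv g₂ 0))
      rw [h0₁, h0₂, h1₁, h1₂]
  have ht : t ∈ Ioo (-((k:ℝ)+1)) ((k:ℝ)+1) := by
    rw [mem_Ioo]
    constructor
    · linarith [neg_abs_le t]
    · linarith [le_abs_self t]
  have := heq ht
  exact congrArg Prod.fst this



lemma diff_deriv_of_contDiff_two {g : ℝ → ℝ} (hg : ContDiff ℝ 2 g) :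
    Differentiable ℝ (deriv g) := by
  have h := (contDiff_succ_iff_deriv (n := 1) (f := g)).1
    (by rw [show ((1 : WithTop ℕ∞) + 1) = 2 by norm_num]; exact hg)
  exact h.2.2.differentiable (by norm_num)

lemma partB_nonneg (n : ℕ) (hn : 2 ≤ n) (b : ℝ) (hb : |b| < 1) (g : ℝ → ℝ)
    (hg : ContDiff ℝ 2 g) (h1 : deriv g 0 = b)
    (hode : ∀ t : ℝ, deriv (deriv g) t
      = g t ^ (n - 1) * (1 - (deriv g t) ^ 2) ^ ((n + 2 : ℝ) / 2)) :
    ∀ t, 0 ≤ t → |deriv g t| < 1 := by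
  have hgd : Differentiable ℝ g := hg.differentiable (by norm_num)
  have hgd2 : Differentiable ℝ (deriv g) := diff_deriv_of_contDiff_two hg
  have hcont : Continuous (deriv g) := hgd2.continuous
  by_contra hcon
  push_neg at hcon
  obtain ⟨t₁, ht₁0, ht₁⟩ := hcon
  set S : Set ℝ := Ici 0 ∩ {t | 1 ≤ |deriv g t|} with hS
  have hSne : S.Nonempty := ⟨t₁, ht₁0, ht₁⟩
  have hSclosed : IsClosed S :=
    isClosed_Ici.inter (isClosed_le continuous_const hcont.abs)
  have hbdd : BddBelow S := ⟨0, fun x hx => hx.1⟩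
  set τ := sInf S with hτ
  have hτS : τ ∈ S := hSclosed.csInf_mem hSne hbdd
  have hτ0 : 0 ≤ τ := hτS.1
  have hτ1 : 1 ≤ |deriv g τ| := hτS.2
  have hτpos : 0 < τ := by
    rcases lt_or_eq_of_le hτ0 with h | h
    · exact h
    · exfalso
      rw [← h, h1] at hτ1
      linarith
  have hlt : ∀ s, 0 ≤ s → s < τ → (deriv g s) ^ 2 < 1 := by
    intro s hs0 hsτ
    have hnot : s ∉ S := notMem_of_lt_csInf hsτ hbdd
    have h2 : ¬ (1 ≤ |deriv g s|) := fun h => hnot ⟨hs0, h⟩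
    push_neg at h2
    nlinarith [sq_abs (deriv g s), abs_nonneg (deriv g s)]
  -- the conserved energy
  set E : ℝ → ℝ := fun t => (1 - deriv g t ^ 2) ^ (-(n:ℝ)/2) - g t ^ n with hE
  have hEder : ∀ s, 0 ≤ s → s < τ → HasDerivAt E 0 s := by
    intro s hs0 hsτ
    have hy : 0 < 1 - deriv g s ^ 2 := by nlinarith [hlt s hs0 hsτ]
    have hd1 : HasDerivAt (fun t => deriv g t ^ 2)
        (2 * deriv g s ^ 1 * deriv (deriv g) s) s := ((hgd2 s).hasDerivAt).pow 2
    have hd2 : HasDerivAt (fun t => 1 - deriv g t ^ 2)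
        (-(2 * deriv g s ^ 1 * deriv (deriv g) s)) s := hd1.const_sub 1
    have hd3 : HasDerivAt (fun y : ℝ => y ^ (-(n:ℝ)/2))
        ((-(n:ℝ)/2) * (1 - deriv g s ^ 2) ^ ((-(n:ℝ)/2) - 1)) (1 - deriv g s ^ 2) :=
      Real.hasDerivAt_rpow_const (Or.inl hy.ne')
    have hd4 := hd3.comp s hd2
    have hd5 : HasDerivAt (fun t => g t ^ n) ((n:ℝ) * g s ^ (n-1) * deriv g s) s := by
      have h := ((hgd s).hasDerivAt).pow n
      exact h
    have hd6 := hd4.sub hd5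
    refine hd6.congr_deriv (Eq.symm ?_)
    rw [hode s]
    have hkey : (1 - deriv g s ^ 2) ^ ((n + 2 : ℝ)/2) * (1 - deriv g s ^ 2) ^ ((-(n:ℝ)/2) - 1)
        = 1 := by
      rw [← Real.rpow_add hy, show ((n:ℝ)+2)/2 + ((-(n:ℝ)/2) - 1) = 0 by ring, Real.rpow_zero]
    linear_combination (-(n:ℝ) * deriv g s * g s ^ (n-1)) * hkey
  have hEconst : ∀ s, 0 ≤ s → s < τ → E s = E 0 := by
    intro s hs0 hsτ
    have hmvt := Convex.norm_image_sub_le_of_norm_hasDerivWithin_le (f := E)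
      (f' := fun _ => (0:ℝ)) (C := 0) (s := Icc 0 s)
      (fun x hx => (hEder x hx.1 (lt_of_le_of_lt hx.2 hsτ)).hasDerivWithinAt)
      (fun x _ => by simp) (convex_Icc 0 s) (left_mem_Icc.2 hs0) (right_mem_Icc.2 hs0)
    simp only [norm_eq_abs, zero_mul] at hmvt
    have : |E s - E 0| ≤ 0 := hmvt
    have := abs_nonneg (E s - E 0)
    have heq : |E s - E 0| = 0 := le_antisymm hmvt (abs_nonneg _)
    rw [abs_eq_zero, sub_eq_zero] at heq
    exact heq
  obtain ⟨C, hC⟩ := (isCompact_Icc (a := (0:ℝ)) (b := τ)).exists_bound_of_continuousOn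
    hgd.continuous.continuousOn
  set B := |E 0| + (max C 0 + 1) ^ n with hB
  have hBpos : 0 < B := by
    have h2 : (0:ℝ) < (max C 0 + 1) ^ n := by positivity
    have := abs_nonneg (E 0)
    linarith
  have hbound : ∀ s, 0 ≤ s → s < τ → B ^ (-(2:ℝ)/n) ≤ 1 - deriv g s ^ 2 := by
    intro s hs0 hsτ
    have hy : 0 < 1 - deriv g s ^ 2 := by nlinarith [hlt s hs0 hsτ]
    have hEs := hEconst s hs0 hsτ
    have hgb : |g s| ≤ max C 0 + 1 := by
      have := hC s ⟨hs0, hsτ.le⟩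
      rw [Real.norm_eq_abs] at this
      have := le_max_left C 0
      linarith [hC s ⟨hs0, hsτ.le⟩]
    have h7 : (1 - deriv g s ^ 2) ^ (-(n:ℝ)/2) ≤ B := by
      have h8 : (1 - deriv g s ^ 2) ^ (-(n:ℝ)/2) = E s + g s ^ n := by rw [hE]; ring
      rw [h8, hEs]
      have h9 : g s ^ n ≤ (max C 0 + 1) ^ n := by
        calc g s ^ n ≤ |g s ^ n| := le_abs_self _
          _ = |g s| ^ n := abs_pow _ _
          _ ≤ (max C 0 + 1) ^ n := pow_le_pow_left₀ (abs_nonneg _) hgb n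
      have h10 : E 0 ≤ |E 0| := le_abs_self _
      rw [hB]
      linarith
    have h11 : B ^ (-(2:ℝ)/n) ≤ ((1 - deriv g s ^ 2) ^ (-(n:ℝ)/2)) ^ (-(2:ℝ)/n) := by
      apply Real.rpow_le_rpow_of_nonpos (Real.rpow_pos_of_pos hy _) h7
      apply div_nonpos_of_nonpos_of_nonneg <;> norm_num
    have h12 : ((1 - deriv g s ^ 2) ^ (-(n:ℝ)/2)) ^ (-(2:ℝ)/n) = 1 - deriv g s ^ 2 := by
      rw [← Real.rpow_mul hy.le]
      have hn0 : (n:ℝ) ≠ 0 := by positivity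
      rw [show (-(n:ℝ)/2) * (-(2:ℝ)/n) = 1 by field_simp, Real.rpow_one]
    rw [h12] at h11
    exact h11
  have hclosed : IsClosed {s : ℝ | B ^ (-(2:ℝ)/n) ≤ 1 - deriv g s ^ 2} :=
    isClosed_le continuous_const (continuous_const.sub (hcont.pow 2))
  have hsub : Ico 0 τ ⊆ {s : ℝ | B ^ (-(2:ℝ)/n) ≤ 1 - deriv g s ^ 2} :=
    fun s hs => hbound s hs.1 hs.2
  have hτmem : τ ∈ closure (Ico 0 τ) := by
    rw [closure_Ico hτpos.ne]
    exact ⟨hτ0, le_refl τ⟩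
  have hτin : τ ∈ {s : ℝ | B ^ (-(2:ℝ)/n) ≤ 1 - deriv g s ^ 2} := by
    have := closure_mono hsub hτmem
    rwa [hclosed.closure_eq] at this
  have hppos : 0 < B ^ (-(2:ℝ)/n) := Real.rpow_pos_of_pos hBpos _
  have : deriv g τ ^ 2 < 1 := by
    have := hτin
    simp only [mem_setOf_eq] at this
    linarith
  nlinarith [sq_abs (deriv g τ)]

lemma partB (n : ℕ) (hn : 2 ≤ n) (b : ℝ) (hb : |b| < 1) (g : ℝ → ℝ)
    (hg : ContDiff ℝ 2 g) (h1 : deriv g 0 = b)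
    (hode : ∀ t : ℝ, deriv (deriv g) t
      = g t ^ (n - 1) * (1 - (deriv g t) ^ 2) ^ ((n + 2 : ℝ) / 2)) :
    ∀ t : ℝ, |deriv g t| < 1 := by
  intro t
  rcases le_or_gt 0 t with h | h
  · exact partB_nonneg n hn b hb g hg h1 hode t h
  · -- use the reflected solution
    set h' : ℝ → ℝ := fun s => g (-s) with hh
    have hc : ContDiff ℝ 2 h' := hg.comp (contDiff_id.neg)
    have hd1 : deriv h' = fun s => -deriv g (-s) := by
      funext s
      rw [hh]
      exact deriv_comp_neg g s
    have hd2 : ∀ s, deriv (deriv h') s = deriv (deriv g) (-s) := by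
      intro s
      rw [hd1]
      have e1 : deriv (fun s : ℝ => -deriv g (-s)) s = -(deriv (fun s : ℝ => deriv g (-s)) s) :=
        deriv.neg
      rw [e1, deriv_comp_neg (deriv g) s, neg_neg]
    have hode' : ∀ s : ℝ, deriv (deriv h') s
        = h' s ^ (n - 1) * (1 - (deriv h' s) ^ 2) ^ ((n + 2 : ℝ) / 2) := by
      intro s
      rw [hd2, hd1, hh]
      simp only
      rw [hode (-s)]
      congr 2
      ring
    have h1' : deriv h' 0 = -b := by rw [hd1]; simp [h1]
    have hb' : |(-b)| < 1 := by rwa [abs_neg]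
    have := partB_nonneg n hn (-b) hb' h' hc h1' hode' (-t) (by linarith)
    rw [hd1] at this
    simp only [neg_neg] at this
    rwa [abs_neg] at this


/-- For every integer `n ≥ 2`, `a > 0`, `|b| < 1`, there is a unique
`C²` function `f : ℝ → ℝ` defined on all of `ℝ` with
`f'' = f^(n-1) (1 - f'^2)^((n+2)/2)`, `f 0 = a`, `f' 0 = b`;
moreover any such solution satisfies `|f'| < 1` everywhere. -/
theorem stmt_0 (n : ℕ) (hn : 2 ≤ n) (a b : ℝ) (ha : 0 < a) (hb : |b| < 1) :
    (∃! f : ℝ → ℝ, ContDiff ℝ 2 f ∧ f 0 = a ∧ deriv f 0 = b ∧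
      ∀ t : ℝ, deriv (deriv f) t
        = f t ^ (n - 1) * (1 - (deriv f t) ^ 2) ^ ((n + 2 : ℝ) / 2)) ∧
    (∀ f : ℝ → ℝ, (ContDiff ℝ 2 f ∧ f 0 = a ∧ deriv f 0 = b ∧
      ∀ t : ℝ, deriv (deriv f) t
        = f t ^ (n - 1) * (1 - (deriv f t) ^ 2) ^ ((n + 2 : ℝ) / 2)) →
      ∀ t : ℝ, |deriv f t| < 1) := by
  constructor
  · obtain ⟨f, hf, hlt⟩ := main_exist n hn a b hb
    refine ⟨f, hf, ?_⟩
    intro g hg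
    exact uniq_sol n hn a b g f hg.1 hg.2.1 hg.2.2.1 hg.2.2.2
      (partB n hn b hb g hg.1 hg.2.2.1 hg.2.2.2)
      hf.1 hf.2.1 hf.2.2.1 hf.2.2.2 hlt
  · intro g hg t
    exact partB n hn b hb g hg.1 hg.2.2.1 hg.2.2.2 t

end StmtAux
end

section
/- Let f be a global spacelike solution with f(0) > 0 and f'(0) ≥ 0. Then f'(t) → 1 and f(t)² · (1 − f'(t)²) → 1 as t → +∞. -/
open Real Filter

/-- A global spacelike solution: a `C²` function `f : ℝ → ℝ` with `|f'| < 1` and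
`f'' = f^(n-1) (1 - f'^2)^((n+2)/2)` on all of `ℝ`. -/
def IsGSS (n : ℕ) (f : ℝ → ℝ) : Prop :=
  ContDiff ℝ 2 f ∧
  ∀ t : ℝ, |deriv f t| < 1 ∧
    deriv (deriv f) t = f t ^ (n - 1) * (1 - (deriv f t) ^ 2) ^ ((n + 2 : ℝ) / 2)

/-- if `f` is a global spacelike solution with `f 0 > 0` and `f' 0 ≥ 0`,
then `f'(t) → 1` and `f(t)² (1 - f'(t)²) → 1` as `t → +∞`. -/
theorem stmt_1 (n : ℕ) (hn : 2 ≤ n) (f : ℝ → ℝ) (hf : IsGSS n f)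
    (h0 : 0 < f 0) (h0' : 0 ≤ deriv f 0) :
    Tendsto (deriv f) atTop (nhds 1) ∧
    Tendsto (fun t => f t ^ 2 * (1 - (deriv f t) ^ 2)) atTop (nhds 1) := by
  have hf' : ContDiff ℝ 2 f ∧ ∀ t : ℝ, |deriv f t| < 1 ∧
      deriv (deriv f) t = f t ^ (n - 1) * (1 - (deriv f t) ^ 2) ^ ((n + 2 : ℝ) / 2) := hf
  obtain ⟨hC, hprop⟩ := hf'
  have habs : ∀ t, |deriv f t| < 1 := fun t => (hprop t).1
  have hode : ∀ t, deriv (deriv f) t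
      = f t ^ (n - 1) * (1 - (deriv f t) ^ 2) ^ ((n + 2 : ℝ) / 2) := fun t => (hprop t).2
  have hu_pos : ∀ t, 0 < 1 - (deriv f t) ^ 2 := by
    intro t
    have h := habs t
    nlinarith [sq_abs (deriv f t), abs_nonneg (deriv f t)]
  have hfd : Differentiable ℝ f := hC.differentiable (by norm_num)
  have hC' : ContDiff ℝ 1 (deriv f) := by
    have h2 : ContDiff ℝ (1 + 1) f := by
      convert hC using 2
      exact one_add_one_eq_two
    exact (contDiff_succ_iff_deriv.mp h2).2.2
  have hgd : Differentiable ℝ (deriv f) := hC'.differentiable one_ne_zero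
  have hgc : Continuous (deriv f) := hgd.continuous
  have hfc : Continuous f := hfd.continuous
  have hdd_pos : ∀ t, 0 < f t → 0 < deriv (deriv f) t := by
    intro t ht
    rw [hode t]
    exact mul_pos (pow_pos ht _) (Real.rpow_pos_of_pos (hu_pos t) _)
  -- f > 0 on [0, ∞)
  have hfpos : ∀ t, 0 ≤ t → 0 < f t := by
    by_contra h
    push_neg at h
    obtain ⟨t1, ht1, hft1⟩ := h
    set S : Set ℝ := {t | 0 ≤ t ∧ f t ≤ 0} with hS
    have hS_ne : S.Nonempty := ⟨t1, ht1, hft1⟩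
    have hS_closed : IsClosed S := by
      have : S = {t : ℝ | 0 ≤ t} ∩ {t : ℝ | f t ≤ 0} := rfl
      rw [this]
      exact (isClosed_le continuous_const continuous_id).inter
        (isClosed_le hfc continuous_const)
    have hS_bdd : BddBelow S := ⟨0, fun x hx => hx.1⟩
    set t0 : ℝ := sInf S with ht0
    have ht0_mem : t0 ∈ S := hS_closed.csInf_mem hS_ne hS_bdd
    have ht0_pos : 0 < t0 := by
      rcases lt_or_eq_of_le ht0_mem.1 with h | h
      · exact h
      · exact absurd ht0_mem.2 (by rw [← h]; linarith)
    have hpos_lt : ∀ s, 0 < s → s < t0 → 0 < f s := by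
      intro s hs hst
      by_contra hfs
      push_neg at hfs
      exact absurd (csInf_le hS_bdd ⟨hs.le, hfs⟩) (not_le.mpr hst)
    -- deriv f is monotone on [0, t0]
    have hmono_g : MonotoneOn (deriv f) (Set.Icc 0 t0) := by
      apply monotoneOn_of_deriv_nonneg (convex_Icc 0 t0) hgc.continuousOn
        (hgd.differentiableOn)
      intro x hx
      rw [interior_Icc] at hx
      exact (hdd_pos x (hpos_lt x hx.1 hx.2)).le
    have hg_nonneg : ∀ s ∈ Set.Icc (0:ℝ) t0, 0 ≤ deriv f s := by
      intro s hs
      exact le_trans h0' (hmono_g (Set.left_mem_Icc.mpr ht0_pos.le) hs hs.1)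
    have hmono_f : MonotoneOn f (Set.Icc 0 t0) := by
      apply monotoneOn_of_deriv_nonneg (convex_Icc 0 t0) hfc.continuousOn
        (hfd.differentiableOn)
      intro x hx
      rw [interior_Icc] at hx
      exact hg_nonneg x ⟨hx.1.le, hx.2.le⟩
    have : f 0 ≤ f t0 := hmono_f (Set.left_mem_Icc.mpr ht0_pos.le)
      (Set.right_mem_Icc.mpr ht0_pos.le) ht0_pos.le
    linarith [ht0_mem.2]
  -- global monotonicity on [0,∞)
  have hmono_g : MonotoneOn (deriv f) (Set.Ici 0) := by
    apply monotoneOn_of_deriv_nonneg (convex_Ici 0) hgc.continuousOn hgd.differentiableOn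
    intro x hx
    rw [interior_Ici] at hx
    exact (hdd_pos x (hfpos x (le_of_lt hx))).le
  have hg_nonneg : ∀ t, 0 ≤ t → 0 ≤ deriv f t := by
    intro t ht
    exact le_trans h0' (hmono_g Set.self_mem_Ici ht ht)
  have hmono_f : MonotoneOn f (Set.Ici 0) := by
    apply monotoneOn_of_deriv_nonneg (convex_Ici 0) hfc.continuousOn hfd.differentiableOn
    intro x hx
    rw [interior_Ici] at hx
    exact hg_nonneg x hx.le
  have hf_lb : ∀ t, 0 ≤ t → f 0 ≤ f t := fun t ht => hmono_f Set.self_mem_Ici ht ht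
  -- Step B : deriv f tends to some limit L, and L = 1
  set G : ℝ → ℝ := fun t => deriv f (max t 0) with hG
  have hG_mono : Monotone G := by
    intro a b hab
    exact hmono_g (le_max_right a 0) (le_max_right b 0) (max_le_max hab le_rfl)
  have hG_bdd : BddAbove (Set.range G) := by
    refine ⟨1, ?_⟩
    rintro x ⟨t, rfl⟩
    exact le_of_lt (lt_of_abs_lt (habs _))
  set L : ℝ := ⨆ t, G t with hL
  have hG_tendsto : Tendsto G atTop (nhds L) := tendsto_atTop_ciSup hG_mono hG_bdd
  have hGg : G =ᶠ[atTop] deriv f := by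
    filter_upwards [eventually_ge_atTop (0:ℝ)] with t ht
    simp [hG, max_eq_left ht]
  have hg_tendsto : Tendsto (deriv f) atTop (nhds L) := hG_tendsto.congr' hGg
  have hle_L : ∀ t, 0 ≤ t → deriv f t ≤ L := by
    intro t ht
    have h := le_ciSup hG_bdd t
    simpa [hG, max_eq_left ht] using h
  have hL_nonneg : 0 ≤ L := le_trans h0' (by simpa using hle_L 0 le_rfl)
  have hL_le : L ≤ 1 := ciSup_le fun t => le_of_lt (lt_of_abs_lt (habs _))
  have hL_eq : L = 1 := by
    by_contra hne
    have hL_lt : L < 1 := lt_of_le_of_ne hL_le hne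
    set c : ℝ := f 0 ^ (n - 1) * (1 - L ^ 2) ^ ((n + 2 : ℝ) / 2) with hc
    have hL2 : 0 < 1 - L ^ 2 := by nlinarith
    have hc_pos : 0 < c := mul_pos (pow_pos h0 _) (Real.rpow_pos_of_pos hL2 _)
    have hdd_lb : ∀ t, 0 ≤ t → c ≤ deriv (deriv f) t := by
      intro t ht
      rw [hode t]
      have h1 : f 0 ^ (n - 1) ≤ f t ^ (n - 1) := pow_le_pow_left₀ h0.le (hf_lb t ht) _
      have h2 : (1 - L ^ 2) ^ ((n + 2 : ℝ) / 2) ≤ (1 - (deriv f t) ^ 2) ^ ((n + 2 : ℝ) / 2) := by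
        apply Real.rpow_le_rpow hL2.le
        · have := hle_L t ht
          have := hg_nonneg t ht
          nlinarith
        · positivity
      have h3 : (0:ℝ) ≤ f 0 ^ (n - 1) := (pow_pos h0 _).le
      have h4 : (0:ℝ) ≤ (1 - L ^ 2) ^ ((n + 2 : ℝ) / 2) := (Real.rpow_pos_of_pos hL2 _).le
      exact mul_le_mul h1 h2 h4 ((pow_pos (hfpos t ht) _).le)
    -- deriv f t - c * t is monotone on [0,∞)
    have hdiff : Differentiable ℝ (fun t => deriv f t - c * t) := by
      exact hgd.sub (differentiable_id.const_mul c)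
    have hderiv_h : ∀ t, deriv (fun t => deriv f t - c * t) t = deriv (deriv f) t - c := by
      intro t
      have h1 : HasDerivAt (fun t : ℝ => deriv f t - c * t) (deriv (deriv f) t - c) t := by
        exact ((hgd t).hasDerivAt).sub (by simpa using (hasDerivAt_id t).const_mul c)
      exact h1.deriv
    have hmono_h : MonotoneOn (fun t => deriv f t - c * t) (Set.Ici 0) := by
      apply monotoneOn_of_deriv_nonneg (convex_Ici 0) hdiff.continuous.continuousOn
        hdiff.differentiableOn
      intro x hx
      rw [interior_Ici] at hx
      rw [hderiv_h x]
      linarith [hdd_lb x hx.le]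
    have hT : (0:ℝ) ≤ 2 / c := by positivity
    have := hmono_h Set.self_mem_Ici hT hT
    simp only at this
    have hval : c * (2 / c) = 2 := by field_simp
    have : deriv f (2 / c) ≥ 2 := by
      have h5 : deriv f 0 - c * 0 ≤ deriv f (2 / c) - c * (2 / c) := this
      rw [hval] at h5
      linarith
    linarith [lt_of_abs_lt (habs (2 / c))]
  rw [hL_eq] at hg_tendsto
  refine ⟨hg_tendsto, ?_⟩
  -- Step C : conserved quantity
  set q : ℝ := -(n : ℝ) / 2 with hq
  set E : ℝ → ℝ := fun t => (1 - (deriv f t) ^ 2) ^ q - f t ^ n with hE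
  have hEder : ∀ t, HasDerivAt E 0 t := by
    intro t
    have hA : HasDerivAt (fun x => 1 - (deriv f x) ^ 2)
        (-(2 * deriv f t ^ 1 * deriv (deriv f) t)) t := by
      exact (((hgd t).hasDerivAt).pow 2).const_sub 1
    have h1 : HasDerivAt (fun x => (1 - (deriv f x) ^ 2) ^ q)
        ((-(2 * deriv f t ^ 1 * deriv (deriv f) t)) * q * (1 - (deriv f t) ^ 2) ^ (q - 1)) t :=
      hA.rpow_const (Or.inl (hu_pos t).ne')
    have h2 : HasDerivAt (fun x => f x ^ n)
        ((n : ℝ) * f t ^ (n - 1) * deriv f t) t := ((hfd t).hasDerivAt).pow n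
    have h3 := h1.sub h2
    have key : (1 - (deriv f t) ^ 2) ^ (q - 1) * (1 - (deriv f t) ^ 2) ^ ((n + 2 : ℝ) / 2)
        = 1 := by
      rw [← Real.rpow_add (hu_pos t)]
      have : q - 1 + (n + 2 : ℝ) / 2 = 0 := by rw [hq]; ring
      rw [this, Real.rpow_zero]
    have hzero : (-(2 * deriv f t ^ 1 * deriv (deriv f) t)) * q
        * (1 - (deriv f t) ^ 2) ^ (q - 1) - (n : ℝ) * f t ^ (n - 1) * deriv f t = 0 := by
      rw [hode t, hq]
      linear_combination ((n : ℝ) * deriv f t * f t ^ (n - 1)) * key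
    rw [hzero] at h3
    exact h3
  have hE_const : ∀ t, E t = E 0 :=
    fun t => is_const_of_deriv_eq_zero (fun x => (hEder x).differentiableAt)
      (fun x => (hEder x).deriv) t 0
  have hfn : ∀ t, (f t : ℝ) ^ n = (1 - (deriv f t) ^ 2) ^ q - E 0 := by
    intro t
    rw [← hE_const t]
    simp only [hE]
    ring
  -- Step D : the second limit
  have hn_pos : (0:ℝ) < (n:ℝ) := by
    have : 0 < n := lt_of_lt_of_le two_pos hn
    exact_mod_cast this
  set E0 : ℝ := E 0 with hE0
  have hu_tendsto : Tendsto (fun t => 1 - (deriv f t) ^ 2) atTop (nhds 0) := by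
    have := (hg_tendsto.pow 2).const_sub 1
    simpa using this
  have hw_tendsto : Tendsto (fun t => (1 - (deriv f t) ^ 2) ^ ((n:ℝ)/2)) atTop (nhds 0) := by
    have hcont : ContinuousAt (fun x : ℝ => x ^ ((n:ℝ)/2)) 0 :=
      Real.continuousAt_rpow_const 0 _ (Or.inr (by positivity))
    have h := hcont.tendsto.comp hu_tendsto
    simpa [Function.comp_def, Real.zero_rpow (show ((n:ℝ)/2) ≠ 0 by positivity)] using h
  have hψ : ∀ t, 0 ≤ t → (f t ^ 2 * (1 - (deriv f t) ^ 2)) ^ ((n:ℝ)/2)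
      = 1 - E0 * (1 - (deriv f t) ^ 2) ^ ((n:ℝ)/2) := by
    intro t ht
    have hft := hfpos t ht
    have hut := hu_pos t
    rw [Real.mul_rpow (by positivity) hut.le]
    have h1 : ((f t ^ 2 : ℝ)) ^ ((n:ℝ)/2) = f t ^ n := by
      rw [← Real.rpow_natCast (f t) 2, ← Real.rpow_mul hft.le]
      have he : ((2:ℕ):ℝ) * ((n:ℝ)/2) = (n:ℝ) := by push_cast; ring
      rw [he, Real.rpow_natCast]
    rw [h1, hfn t, sub_mul]
    congr 1
    rw [← Real.rpow_add hut]
    have he : q + (n:ℝ)/2 = 0 := by rw [hq]; ring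
    rw [he, Real.rpow_zero]
  have hψ_tendsto : Tendsto (fun t => (f t ^ 2 * (1 - (deriv f t) ^ 2)) ^ ((n:ℝ)/2))
      atTop (nhds 1) := by
    have h := (hw_tendsto.const_mul E0).const_sub 1
    have h2 : Tendsto (fun t => 1 - E0 * (1 - (deriv f t) ^ 2) ^ ((n:ℝ)/2))
        atTop (nhds 1) := by simpa using h
    apply h2.congr'
    filter_upwards [eventually_ge_atTop (0:ℝ)] with t ht
    exact (hψ t ht).symm
  have hcont : ContinuousAt (fun x : ℝ => x ^ ((2:ℝ)/(n:ℝ))) 1 :=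
    Real.continuousAt_rpow_const 1 _ (Or.inl one_ne_zero)
  have h := hcont.tendsto.comp hψ_tendsto
  rw [Real.one_rpow] at h
  apply h.congr'
  filter_upwards [eventually_ge_atTop (0:ℝ)] with t ht
  have hφ : (0:ℝ) < f t ^ 2 * (1 - (deriv f t) ^ 2) :=
    mul_pos (pow_pos (hfpos t ht) 2) (hu_pos t)
  show ((f t ^ 2 * (1 - (deriv f t) ^ 2)) ^ ((n:ℝ)/2)) ^ ((2:ℝ)/(n:ℝ))
      = f t ^ 2 * (1 - (deriv f t) ^ 2)
  rw [← Real.rpow_mul hφ.le]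
  have he : ((n:ℝ)/2) * ((2:ℝ)/(n:ℝ)) = 1 := by field_simp
  rw [he, Real.rpow_one]
end

section
/- Let f be a global spacelike solution with f(0) > 0 whose first integral satisfies C_f ≤ 1. Then f(t) > 0 and f''(t) > 0 for all t ∈ ℝ. -/
open Real Filter

/-- The first integral `C_f = (1 - f'(0)²)^(-n/2) - f(0)^n` of a global spacelike
solution (this quantity is independent of the point where it is evaluated). -/
noncomputable def firstIntegral (n : ℕ) (f : ℝ → ℝ) : ℝ :=
  (1 - (deriv f 0) ^ 2) ^ (-(n : ℝ) / 2) - f 0 ^ n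

section aux
variable {n : ℕ} {f : ℝ → ℝ}

lemma gss_diff (hf : IsGSS n f) : Differentiable ℝ f :=
  hf.1.differentiable (by norm_num)

lemma gss_diff1 (hf : IsGSS n f) : Differentiable ℝ (deriv f) := by
  have h2 : ContDiff ℝ 2 f := hf.1
  rw [show (2 : WithTop ℕ∞) = 1 + 1 from by norm_num, contDiff_succ_iff_deriv] at h2
  exact h2.2.2.differentiable (by norm_num)

lemma gss_pos (hf : IsGSS n f) (t : ℝ) : 0 < 1 - (deriv f t) ^ 2 := by
  have := (hf.2 t).1
  have h := abs_lt.mp this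
  nlinarith [h.1, h.2]

/-- the first integral is constant -/
lemma gss_const (hn : 2 ≤ n) (hf : IsGSS n f) (t : ℝ) :
    (1 - (deriv f t) ^ 2) ^ (-(n : ℝ) / 2) - f t ^ n = firstIntegral n f := by
  set u := deriv f with hu
  have key : ∀ s : ℝ, HasDerivAt (fun r => (1 - u r ^ 2) ^ (-(n : ℝ) / 2) - f r ^ n) 0 s := by
    intro s
    have hdu : HasDerivAt u (deriv u s) s := (gss_diff1 hf s).hasDerivAt
    have hdf : HasDerivAt f (u s) s := (gss_diff hf s).hasDerivAt
    have hpos : 0 < 1 - u s ^ 2 := gss_pos hf s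
    have h1 : HasDerivAt (fun r => 1 - u r ^ 2) (-(2 * u s ^ 1 * deriv u s)) s :=
      (hdu.pow 2).const_sub 1
    have h2 : HasDerivAt (fun r => (1 - u r ^ 2) ^ (-(n : ℝ) / 2))
        ((-(2 * u s ^ 1 * deriv u s)) * (-(n : ℝ) / 2) * (1 - u s ^ 2) ^ (-(n : ℝ) / 2 - 1)) s :=
      h1.rpow_const (Or.inl hpos.ne')
    have h3 : HasDerivAt (fun r => f r ^ n) ((n : ℝ) * f s ^ (n - 1) * u s) s := hdf.pow n
    have := h2.sub h3
    refine HasDerivAt.congr_deriv this ?_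
    rw [(hf.2 s).2]
    have hmul : (1 - u s ^ 2) ^ ((n + 2 : ℝ) / 2) * (1 - u s ^ 2) ^ (-(n : ℝ) / 2 - 1) = 1 := by
      rw [← Real.rpow_add hpos,
        show ((n : ℝ) + 2) / 2 + (-(n : ℝ) / 2 - 1) = 0 by ring, Real.rpow_zero]
    have : (-(2 * u s ^ 1 * (f s ^ (n - 1) * (1 - u s ^ 2) ^ ((n + 2 : ℝ) / 2)))) *
        (-(n : ℝ) / 2) * (1 - u s ^ 2) ^ (-(n : ℝ) / 2 - 1)
        = (n : ℝ) * (u s * f s ^ (n - 1)) *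
          ((1 - u s ^ 2) ^ ((n + 2 : ℝ) / 2) * (1 - u s ^ 2) ^ (-(n : ℝ) / 2 - 1)) := by
      ring
    rw [this, hmul]
    ring
  have hdiff : Differentiable ℝ (fun r => (1 - u r ^ 2) ^ (-(n : ℝ) / 2) - f r ^ n) :=
    fun s => (key s).differentiableAt
  have := is_const_of_deriv_eq_zero hdiff (fun s => (key s).deriv) t 0
  simpa [firstIntegral] using this

lemma gss_ge_one (hf : IsGSS n f) (t : ℝ) :
    1 ≤ (1 - (deriv f t) ^ 2) ^ (-(n : ℝ) / 2) := by
  apply Real.one_le_rpow_of_pos_of_le_one_of_nonpos (gss_pos hf t)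
  · nlinarith [sq_nonneg (deriv f t)]
  · have : (0:ℝ) ≤ n := n.cast_nonneg
    linarith


lemma gss_bound (hn : 2 ≤ n) (hf : IsGSS n f) (hC1 : firstIntegral n f = 1) (t : ℝ)
    (hft : 0 ≤ f t) : deriv f t ^ 2 ≤ f t ^ n := by
  set u := deriv f t with hu
  set x := f t ^ n with hx
  have hx0 : 0 ≤ x := pow_nonneg hft n
  have hpos : 0 < 1 - u ^ 2 := gss_pos hf t
  have hu2 : u ^ 2 < 1 := by nlinarith
  rcases le_or_gt 1 x with h1 | h1
  · linarith
  · -- x < 1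
    have hC := gss_const hn hf t
    rw [hC1] at hC
    have hrel : (1 - u ^ 2) ^ (-(n : ℝ) / 2) = 1 + x := by linarith
    have hinv : (1 - u ^ 2) ^ ((n : ℝ) / 2) = (1 + x)⁻¹ := by
      rw [show ((n : ℝ) / 2) = -(-(n:ℝ)/2) by ring, Real.rpow_neg hpos.le, hrel]
    have h1x : 0 < 1 - x := by linarith
    have hkey : (1 - x) ^ ((n : ℝ) / 2) ≤ (1 - u ^ 2) ^ ((n : ℝ) / 2) := by
      rw [hinv]
      calc (1 - x) ^ ((n : ℝ) / 2) ≤ (1 - x) ^ (1 : ℝ) := by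
            apply Real.rpow_le_rpow_of_exponent_ge h1x (by linarith)
            have : (2 : ℝ) ≤ n := by exact_mod_cast hn
            linarith
        _ = 1 - x := Real.rpow_one _
        _ ≤ (1 + x)⁻¹ := by
            rw [inv_eq_one_div, le_div_iff₀ (by linarith)]
            nlinarith
    by_contra hcon
    push_neg at hcon
    have : (1 - u ^ 2) ^ ((n : ℝ) / 2) < (1 - x) ^ ((n : ℝ) / 2) := by
      apply Real.rpow_lt_rpow hpos.le (by linarith) (by positivity)
    linarith

end aux

/-- a global spacelike solution with `f 0 > 0` and first integral `≤ 1`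
is everywhere positive and strictly convex. -/
theorem stmt_2 (n : ℕ) (hn : 2 ≤ n) (f : ℝ → ℝ) (hf : IsGSS n f)
    (h0 : 0 < f 0) (hc : firstIntegral n f ≤ 1) :
    ∀ t : ℝ, 0 < f t ∧ 0 < deriv (deriv f) t := by
  have hcont : Continuous f := (gss_diff hf).continuous
  have hdf : ∀ t : ℝ, HasDerivAt f (deriv f t) t := fun t => (gss_diff hf t).hasDerivAt
  have hfpos : ∀ t : ℝ, 0 < f t := by
    by_contra hcon
    push_neg at hcon
    obtain ⟨t₀, ht₀⟩ := hcon
    -- find a zero of f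
    obtain ⟨t₁, ht₁mem, ht₁⟩ : ∃ t₁ ∈ Set.uIcc 0 t₀, f t₁ = 0 := by
      have h := intermediate_value_uIcc (a := (0:ℝ)) (b := t₀) hcont.continuousOn
      have h0 : (0:ℝ) ∈ Set.uIcc (f 0) (f t₀) := Set.mem_uIcc.mpr (Or.inr ⟨ht₀, h0.le⟩)
      obtain ⟨t₁, ht₁mem, ht₁⟩ := h h0
      exact ⟨t₁, ht₁mem, ht₁⟩
    -- first integral equals 1
    have hC1 : firstIntegral n f = 1 := by
      have h := gss_const hn hf t₁
      rw [ht₁, zero_pow (by omega : n ≠ 0), sub_zero] at h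
      have := gss_ge_one hf t₁
      linarith
    have hb : ∀ t : ℝ, 0 ≤ f t → f t ≤ 1 → deriv f t ^ 2 ≤ f t ^ 2 := by
      intro t h1 h2
      calc deriv f t ^ 2 ≤ f t ^ n := gss_bound hn hf hC1 t h1
        _ ≤ f t ^ 2 := pow_le_pow_of_le_one h1 h2 hn
    have ht₁ne : t₁ ≠ 0 := by
      intro h; rw [h] at ht₁; linarith
    rcases ht₁ne.lt_or_gt with ht₁neg | ht₁pos
    · -- t₁ < 0 : mirror case
      set Z := Set.Icc t₁ 0 ∩ f ⁻¹' {0} with hZ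
      have hZc : IsClosed Z := isClosed_Icc.inter (isClosed_singleton.preimage hcont)
      have hZne : Z.Nonempty := ⟨t₁, ⟨le_refl _, ht₁neg.le⟩, ht₁⟩
      have hZbdd : BddAbove Z := ⟨0, fun x hx => hx.1.2⟩
      set t₂ := sSup Z with ht₂def
      have ht₂Z : t₂ ∈ Z := hZc.csSup_mem hZne hZbdd
      have hft₂ : f t₂ = 0 := ht₂Z.2
      have ht₂0 : t₂ < 0 := lt_of_le_of_ne ht₂Z.1.2 (by intro h; rw [h] at hft₂; linarith)
      have hfp : ∀ t, t₂ < t → t ≤ 0 → 0 < f t := by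
        intro t htl htr
        by_contra hcf
        push_neg at hcf
        obtain ⟨t₃, ht₃mem, ht₃⟩ : ∃ t₃ ∈ Set.uIcc t 0, f t₃ = 0 := by
          have h := intermediate_value_uIcc (a := t) (b := (0:ℝ)) hcont.continuousOn
          have h0 : (0:ℝ) ∈ Set.uIcc (f t) (f 0) := Set.mem_uIcc.mpr (Or.inl ⟨hcf, h0.le⟩)
          obtain ⟨t₃, hm, hv⟩ := h h0
          exact ⟨t₃, hm, hv⟩
        have hb1 : t ≤ t₃ ∧ t₃ ≤ 0 := by
          rcases Set.mem_uIcc.mp ht₃mem with ⟨a, b⟩ | ⟨a, b⟩ <;> constructor <;> linarith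
        have : t₃ ∈ Z := ⟨⟨by linarith [ht₂Z.1.1], hb1.2⟩, ht₃⟩
        have := le_csSup hZbdd this
        linarith
      -- get neighborhood where f < 1
      obtain ⟨l, r, hmem, hsub⟩ := mem_nhds_iff_exists_Ioo_subset.mp
        ((hcont.continuousAt (x := t₂)).preimage_mem_nhds
          (Iio_mem_nhds (by rw [hft₂]; norm_num : f t₂ < (1:ℝ))))
      set s := min 0 ((r + t₂) / 2) with hs
      have hst : t₂ < s := lt_min (by linarith) (by linarith [hmem.2])
      have hs0 : s ≤ 0 := min_le_left _ _
      have hIccsub : Set.Icc t₂ s ⊆ Set.Ioo l r := by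
        intro x hx
        constructor
        · exact lt_of_lt_of_le hmem.1 hx.1
        · have : s < r := lt_of_le_of_lt (min_le_right _ _) (by linarith [hmem.2, ht₂0])
          linarith [hx.2]
      have hflt1 : ∀ x ∈ Set.Icc t₂ s, f x < 1 := fun x hx => hsub (hIccsub hx)
      have hfge : ∀ x ∈ Set.Icc t₂ s, 0 ≤ f x := by
        intro x hx
        rcases eq_or_lt_of_le hx.1 with h | h
        · rw [← h, hft₂]
        · exact (hfp x h (le_trans hx.2 hs0)).le
      set g := fun t => f t * Real.exp (-t) with hg
      have hmono : AntitoneOn g (Set.Icc t₂ s) := by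
        apply antitoneOn_of_deriv_nonpos (convex_Icc _ _)
        · exact (hcont.mul (Real.continuous_exp.comp continuous_neg)).continuousOn
        · apply Differentiable.differentiableOn
          exact (gss_diff hf).mul ((Real.differentiable_exp.comp differentiable_neg))
        · intro x hx
          rw [interior_Icc] at hx
          have hd : HasDerivAt g (deriv f x * Real.exp (-x) + f x * (Real.exp (-x) * (-1))) x :=
            (hdf x).mul ((Real.hasDerivAt_exp (-x)).comp x (hasDerivAt_neg x))
          rw [hd.deriv]
          have hxm : x ∈ Set.Icc t₂ s := ⟨hx.1.le, hx.2.le⟩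
          have h1 := hfge x hxm
          have h2 := hflt1 x hxm
          have h3 := hb x h1 h2.le
          have h4 : deriv f x ≤ f x := by nlinarith
          have h5 : (0:ℝ) < Real.exp (-x) := Real.exp_pos _
          nlinarith
      have := hmono (Set.left_mem_Icc.mpr hst.le) (Set.right_mem_Icc.mpr hst.le) hst.le
      have hgs : 0 < g s := mul_pos (hfp s hst hs0) (Real.exp_pos _)
      have hgt : g t₂ = 0 := by rw [hg]; simp [hft₂]
      rw [hgt] at this
      linarith
    · -- t₁ > 0
      set Z := Set.Icc 0 t₁ ∩ f ⁻¹' {0} with hZ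
      have hZc : IsClosed Z := isClosed_Icc.inter (isClosed_singleton.preimage hcont)
      have hZne : Z.Nonempty := ⟨t₁, ⟨ht₁pos.le, le_refl _⟩, ht₁⟩
      have hZbdd : BddBelow Z := ⟨0, fun x hx => hx.1.1⟩
      set t₂ := sInf Z with ht₂def
      have ht₂Z : t₂ ∈ Z := hZc.csInf_mem hZne hZbdd
      have hft₂ : f t₂ = 0 := ht₂Z.2
      have ht₂0 : 0 < t₂ := lt_of_le_of_ne ht₂Z.1.1 (by intro h; rw [← h] at hft₂; linarith)
      have hfp : ∀ t, 0 ≤ t → t < t₂ → 0 < f t := by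
        intro t htl htr
        by_contra hcf
        push_neg at hcf
        obtain ⟨t₃, ht₃mem, ht₃⟩ : ∃ t₃ ∈ Set.uIcc 0 t, f t₃ = 0 := by
          have h := intermediate_value_uIcc (a := (0:ℝ)) (b := t) hcont.continuousOn
          have h0 : (0:ℝ) ∈ Set.uIcc (f 0) (f t) := Set.mem_uIcc.mpr (Or.inr ⟨hcf, h0.le⟩)
          obtain ⟨t₃, hm, hv⟩ := h h0
          exact ⟨t₃, hm, hv⟩
        have hb1 : 0 ≤ t₃ ∧ t₃ ≤ t := by
          rcases Set.mem_uIcc.mp ht₃mem with ⟨a, b⟩ | ⟨a, b⟩ <;> constructor <;> linarith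
        have : t₃ ∈ Z := ⟨⟨hb1.1, by linarith [ht₂Z.1.2]⟩, ht₃⟩
        have := csInf_le hZbdd this
        linarith
      obtain ⟨l, r, hmem, hsub⟩ := mem_nhds_iff_exists_Ioo_subset.mp
        ((hcont.continuousAt (x := t₂)).preimage_mem_nhds
          (Iio_mem_nhds (by rw [hft₂]; norm_num : f t₂ < (1:ℝ))))
      set s := max 0 ((l + t₂) / 2) with hs
      have hst : s < t₂ := max_lt ht₂0 (by linarith [hmem.1])
      have hs0 : 0 ≤ s := le_max_left _ _
      have hIccsub : Set.Icc s t₂ ⊆ Set.Ioo l r := by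
        intro x hx
        constructor
        · have : l < s := lt_of_lt_of_le (by linarith [hmem.1, ht₂0]) (le_max_right _ _)
          linarith [hx.1]
        · exact lt_of_le_of_lt hx.2 hmem.2
      have hflt1 : ∀ x ∈ Set.Icc s t₂, f x < 1 := fun x hx => hsub (hIccsub hx)
      have hfge : ∀ x ∈ Set.Icc s t₂, 0 ≤ f x := by
        intro x hx
        rcases eq_or_lt_of_le hx.2 with h | h
        · rw [h, hft₂]
        · exact (hfp x (le_trans hs0 hx.1) h).le
      set g := fun t => f t * Real.exp t with hg
      have hmono : MonotoneOn g (Set.Icc s t₂) := by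
        apply monotoneOn_of_deriv_nonneg (convex_Icc _ _)
        · exact (hcont.mul Real.continuous_exp).continuousOn
        · exact ((gss_diff hf).mul Real.differentiable_exp).differentiableOn
        · intro x hx
          rw [interior_Icc] at hx
          have hd : HasDerivAt g (deriv f x * Real.exp x + f x * Real.exp x) x :=
            (hdf x).mul (Real.hasDerivAt_exp x)
          rw [hd.deriv]
          have hxm : x ∈ Set.Icc s t₂ := ⟨hx.1.le, hx.2.le⟩
          have h1 := hfge x hxm
          have h2 := hflt1 x hxm
          have h3 := hb x h1 h2.le
          have h4 : -f x ≤ deriv f x := by nlinarith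
          have h5 : (0:ℝ) < Real.exp x := Real.exp_pos _
          nlinarith
      have := hmono (Set.left_mem_Icc.mpr hst.le) (Set.right_mem_Icc.mpr hst.le) hst.le
      have hgs : 0 < g s := mul_pos (hfp s hs0 hst) (Real.exp_pos _)
      have hgt : g t₂ = 0 := by rw [hg]; simp [hft₂]
      rw [hgt] at this
      linarith
  intro t
  refine ⟨hfpos t, ?_⟩
  rw [(hf.2 t).2]
  exact mul_pos (pow_pos (hfpos t) _) (Real.rpow_pos_of_pos (gss_pos hf t) _)
end

section
/- Let f be a global spacelike solution with f(0) > 0 whose first integral satisfies C_f > 1. Then f changes sign on ℝ; in particular there exists t ∈ ℝ with f(t) < 0. -/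
open Real Filter

/-- a global spacelike solution with `f 0 > 0` and first integral `> 1`
changes sign on `ℝ`; in particular it is somewhere negative. -/
theorem stmt_3 (n : ℕ) (hn : 2 ≤ n) (f : ℝ → ℝ) (hf : IsGSS n f)
    (h0 : 0 < f 0) (hc : 1 < firstIntegral n f) :
    (∃ t : ℝ, f t < 0) ∧ (∃ t : ℝ, 0 < f t) := by
  obtain ⟨hC2, hode⟩ := hf
  have h2' : ContDiff ℝ (1 + 1) f := by
    norm_num
    exact hC2
  have hdf1 : ContDiff ℝ 1 (deriv f) := (contDiff_succ_iff_deriv.mp h2').2.2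
  have hfd : Differentiable ℝ f := hC2.differentiable (by norm_num)
  have hdfd : Differentiable ℝ (deriv f) := hdf1.differentiable (by norm_num)
  have hdfc : Continuous (deriv f) := hdfd.continuous
  have hpos : ∀ t, 0 < 1 - deriv f t ^ 2 := by
    intro t
    have h := (hode t).1
    rw [abs_lt] at h
    nlinarith [h.1, h.2]
  -- the first integral is constant
  have hg : ∀ t, HasDerivAt
      (fun t => (1 - deriv f t ^ 2) ^ (-(n : ℝ) / 2) - f t ^ n) 0 t := by
    intro t
    have h1 : HasDerivAt (fun t => 1 - deriv f t ^ 2)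
        (-(2 * deriv f t ^ 1 * deriv (deriv f) t)) t :=
      (((hdfd t).hasDerivAt.pow 2).const_sub 1)
    have h2 := h1.rpow_const (p := -(n : ℝ) / 2) (Or.inl (hpos t).ne')
    have h3 := (hfd t).hasDerivAt.pow n
    have h4 := h2.sub h3
    apply HasDerivAt.congr_deriv h4
    symm
    rw [(hode t).2]
    have hXX : (1 - deriv f t ^ 2) ^ ((n + 2 : ℝ) / 2) *
        (1 - deriv f t ^ 2) ^ (-(n : ℝ) / 2 - 1) = 1 := by
      rw [← Real.rpow_add (hpos t)]
      have he : ((n : ℝ) + 2) / 2 + (-(n : ℝ) / 2 - 1) = 0 := by ring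
      rw [he, Real.rpow_zero]
    set Y := (1 - deriv f t ^ 2) ^ ((n + 2 : ℝ) / 2) with hY
    set Z := (1 - deriv f t ^ 2) ^ (-(n : ℝ) / 2 - 1) with hZ
    linear_combination (-((n : ℝ) * deriv f t * f t ^ (n - 1))) * hXX
  have key : ∀ t, (1 - deriv f t ^ 2) ^ (-(n : ℝ) / 2) - f t ^ n = firstIntegral n f := by
    intro t
    have := is_const_of_deriv_eq_zero
      (f := fun t => (1 - deriv f t ^ 2) ^ (-(n : ℝ) / 2) - f t ^ n)
      (fun x => (hg x).differentiableAt) (fun x => (hg x).deriv) t 0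
    simpa [firstIntegral] using this
  refine ⟨?_, ⟨0, h0⟩⟩
  by_contra hcon
  push_neg at hcon
  -- hcon : ∀ t, 0 ≤ f t
  set C := firstIntegral n f with hCdef
  have hC0 : 0 < C := lt_trans one_pos hc
  have hnpos : (0 : ℝ) < (n : ℝ) := by exact_mod_cast Nat.pos_of_ne_zero (by omega)
  set b := C ^ (-2 / (n : ℝ)) with hbdef
  have hb0 : 0 < b := Real.rpow_pos_of_pos hC0 _
  have hb1 : b < 1 :=
    Real.rpow_lt_one_of_one_lt_of_neg hc (div_neg_of_neg_of_pos (by norm_num) hnpos)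
  have hlow : ∀ t, 1 - deriv f t ^ 2 ≤ b := by
    intro t
    by_contra hgt
    push_neg at hgt
    have hXpos := hpos t
    have h1 : C ≤ (1 - deriv f t ^ 2) ^ (-(n : ℝ) / 2) := by
      have hk := key t
      have hfn : 0 ≤ f t ^ n := pow_nonneg (hcon t) n
      linarith
    have hy : 0 < (1 - deriv f t ^ 2) ^ ((n : ℝ) / 2) := Real.rpow_pos_of_pos hXpos _
    have h1' : C ≤ ((1 - deriv f t ^ 2) ^ ((n : ℝ) / 2))⁻¹ := by
      rwa [neg_div, Real.rpow_neg hXpos.le] at h1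
    have h2 : (1 - deriv f t ^ 2) ^ ((n : ℝ) / 2) ≤ C⁻¹ := (le_inv_comm₀ hC0 hy).mp h1'
    have h3 : b ^ ((n : ℝ) / 2) < (1 - deriv f t ^ 2) ^ ((n : ℝ) / 2) :=
      Real.rpow_lt_rpow hb0.le hgt (by positivity)
    have h4 : b ^ ((n : ℝ) / 2) = C⁻¹ := by
      rw [hbdef, ← Real.rpow_mul hC0.le]
      have he : -2 / (n : ℝ) * ((n : ℝ) / 2) = -1 := by
        field_simp
      rw [he, Real.rpow_neg_one]
    rw [h4] at h3
    linarith
  set ε := Real.sqrt (1 - b) with hεdef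
  have hε : 0 < ε := Real.sqrt_pos.mpr (by linarith)
  have hsq : ∀ t, ε ≤ |deriv f t| := by
    intro t
    have h1 : 1 - b ≤ deriv f t ^ 2 := by linarith [hlow t]
    have h2 := Real.sqrt_le_sqrt h1
    rwa [Real.sqrt_sq_eq_abs] at h2
  have hne : ∀ t, deriv f t ≠ 0 := by
    intro t h
    have h2 := hsq t
    rw [h, abs_zero] at h2
    linarith
  rcases (hne 0).lt_or_gt with hneg | hpos0
  · -- deriv f is everywhere ≤ -ε, so f is eventually negative on the right
    have hall : ∀ t, deriv f t ≤ -ε := by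
      intro t
      have hpt : deriv f t < 0 := by
        rcases (hne t).lt_or_gt with h | h
        · exact h
        · exfalso
          obtain ⟨c, _, hc0⟩ := intermediate_value_uIcc (a := (0 : ℝ)) (b := t)
            (f := deriv f) hdfc.continuousOn
            (Set.mem_uIcc.mpr (Or.inl ⟨hneg.le, h.le⟩))
          exact hne c hc0
      have h2 := hsq t
      rw [abs_of_neg hpt] at h2
      linarith
    have hxy : (0 : ℝ) ≤ (f 0 + 1) / ε := div_nonneg (by linarith) hε.le
    have hmvt := image_sub_le_mul_sub_of_deriv_le hfd hall hxy
    have h5 : -ε * ((f 0 + 1) / ε - 0) = -(f 0 + 1) := by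
      field_simp
      ring
    rw [h5] at hmvt
    have := hcon ((f 0 + 1) / ε)
    linarith
  · -- deriv f is everywhere ≥ ε, so f is negative far on the left
    have hall : ∀ t, ε ≤ deriv f t := by
      intro t
      have hpt : 0 < deriv f t := by
        rcases (hne t).lt_or_gt with h | h
        · exfalso
          obtain ⟨c, _, hc0⟩ := intermediate_value_uIcc (a := (0 : ℝ)) (b := t)
            (f := deriv f) hdfc.continuousOn
            (Set.mem_uIcc.mpr (Or.inr ⟨h.le, hpos0.le⟩))
          exact hne c hc0
        · exact h
      have h2 := hsq t
      rw [abs_of_pos hpt] at h2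
      linarith
    have hxy : -((f 0 + 1) / ε) ≤ (0 : ℝ) := by
      have : (0 : ℝ) ≤ (f 0 + 1) / ε := div_nonneg (by linarith) hε.le
      linarith
    have hmvt := mul_sub_le_image_sub_of_le_deriv hfd hall hxy
    have h5 : ε * ((0 : ℝ) - -((f 0 + 1) / ε)) = f 0 + 1 := by
      field_simp
      ring
    rw [h5] at hmvt
    have := hcon (-((f 0 + 1) / ε))
    linarith
end

section
/- Let f be a global spacelike solution with f(0) > 0, f'(0) ≥ 0, whose first integral satisfies C_f = 1. Then f'(t) > 0 for all t ∈ ℝ, and both f(t) → 0 and f'(t) → 0 as t → −∞. -/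
open Real Filter

open Set in
lemma gronwall_zero {E E' : ℝ → ℝ} {a b K : ℝ}
    (hd : ∀ t ∈ Icc a b, HasDerivAt E (E' t) t)
    (hb : ∀ t ∈ Icc a b, |E' t| ≤ K * |E t|)
    (ha : E a = 0) : ∀ t ∈ Icc a b, E t = 0 := by
  intro t ht
  have key := norm_le_gronwallBound_of_norm_deriv_right_le (f := E) (f' := E')
      (δ := 0) (K := K) (ε := 0) (a := a) (b := b)
    (fun s hs => (hd s hs).continuousAt.continuousWithinAt)
    (fun s hs => (hd s (Ico_subset_Icc_self hs)).hasDerivWithinAt)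
    (by simp [ha]) (fun s hs => by simpa using hb s (Ico_subset_Icc_self hs))
  have h1 := key t ht
  rw [gronwallBound_ε0_δ0] at h1
  have h2 : |E t| ≤ 0 := by simpa using h1
  have := abs_nonneg (E t)
  have : |E t| = 0 := le_antisymm h2 this
  exact abs_eq_zero.mp this

open Set in
lemma gronwall_zero' {E E' : ℝ → ℝ} {a b K : ℝ}
    (hd : ∀ t ∈ Icc a b, HasDerivAt E (E' t) t)
    (hb : ∀ t ∈ Icc a b, |E' t| ≤ K * |E t|)
    (hB : E b = 0) : ∀ t ∈ Icc a b, E t = 0 := by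
  intro t ht
  have hmem : ∀ τ ∈ Icc a b, a + b - τ ∈ Icc a b := by
    intro τ hτ
    exact ⟨by linarith [hτ.2], by linarith [hτ.1]⟩
  have hd' : ∀ τ ∈ Icc a b, HasDerivAt (fun τ => E (a + b - τ)) (E' (a + b - τ) * (-1)) τ := by
    intro τ hτ
    exact (hd _ (hmem τ hτ)).comp τ ((hasDerivAt_id τ).const_sub (a + b))
  have hb' : ∀ τ ∈ Icc a b, |E' (a + b - τ) * (-1)| ≤ K * |E (a + b - τ)| := by
    intro τ hτ
    simpa using hb _ (hmem τ hτ)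
  have ha' : E (a + b - a) = 0 := by simpa using hB
  have := gronwall_zero hd' hb' ha' (a + b - t) (hmem t ht)
  simpa using this

set_option maxHeartbeats 1000000 in
/-- a global spacelike solution with `f 0 > 0`, `f' 0 ≥ 0` and first
integral `= 1` has `f' > 0` everywhere and `f, f' → 0` as `t → -∞`. -/
theorem stmt_5 (n : ℕ) (hn : 2 ≤ n) (f : ℝ → ℝ) (hf : IsGSS n f)
    (h0 : 0 < f 0) (h0' : 0 ≤ deriv f 0) (hc : firstIntegral n f = 1) :
    (∀ t : ℝ, 0 < deriv f t) ∧
    Tendsto f atBot (nhds 0) ∧ Tendsto (deriv f) atBot (nhds 0) := by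
  obtain ⟨hsm, hode⟩ := hf
  have hn0 : n ≠ 0 := by omega
  have hnR : (0:ℝ) < n := by positivity
  -- differentiability facts
  have h2 : ContDiff ℝ ((1:ℕ∞)+1) f := by
    have h2' : ContDiff ℝ ((1+1:ℕ)) f := by exact_mod_cast hsm
    rw [show ((1+1:ℕ) : WithTop ℕ∞) = (1:ℕ∞)+1 by norm_cast] at h2'
    exact h2'
  obtain ⟨hdf, -, h1d⟩ := contDiff_succ_iff_deriv.mp h2
  obtain ⟨hdd, hcontdd⟩ := contDiff_one_iff_deriv.mp h1d
  have hDf : ∀ t, HasDerivAt f (deriv f t) t := fun t => (hdf t).hasDerivAt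
  have hDd : ∀ t, HasDerivAt (deriv f) (deriv (deriv f) t) t := fun t => (hdd t).hasDerivAt
  have hcd : Continuous (deriv f) := hdd.continuous
  have hcf : Continuous f := hdf.continuous
  -- basic positivity
  have hx : ∀ t, 0 < 1 - deriv f t ^ 2 := by
    intro t
    nlinarith [(hode t).1, sq_abs (deriv f t), abs_nonneg (deriv f t)]
  have hx1 : ∀ t, 1 - deriv f t ^ 2 ≤ 1 := fun t => by nlinarith [sq_nonneg (deriv f t)]
  -- the first integral is constant
  have hψd : ∀ t, HasDerivAt
      (fun t => (1 - deriv f t ^ 2) ^ (-(n:ℝ)/2) - f t ^ n) 0 t := by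
    intro t
    have h1 : HasDerivAt (fun t => 1 - deriv f t ^ 2)
        (-(2 * deriv f t * deriv (deriv f) t)) t := by
      have := (hasDerivAt_const t (1:ℝ)).sub ((hDd t).pow 2)
      simp at this; exact this
    have h2 := h1.rpow_const (p := -(n:ℝ)/2) (Or.inl (hx t).ne')
    have h3 : HasDerivAt (fun t => f t ^ n) ((n:ℝ) * f t ^ (n-1) * deriv f t) t := by
      exact (hDf t).pow n
    have h4 := h2.sub h3
    refine h4.congr_deriv (Eq.symm ?_)
    rw [(hode t).2]
    have key : (1 - deriv f t ^ 2) ^ ((n + 2 : ℝ) / 2) *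
        (1 - deriv f t ^ 2) ^ (-(n:ℝ)/2 - 1) = 1 := by
      rw [← Real.rpow_add (hx t), show ((n + 2 : ℝ) / 2 + (-(n:ℝ)/2 - 1)) = 0 by ring,
        Real.rpow_zero]
    linear_combination (-(n:ℝ) * deriv f t * f t ^ (n-1)) * key
  have hψc : ∀ t, (1 - deriv f t ^ 2) ^ (-(n:ℝ)/2) - f t ^ n = 1 := by
    intro t
    have := is_const_of_deriv_eq_zero (f := fun t => (1 - deriv f t ^ 2) ^ (-(n:ℝ)/2) - f t ^ n)
      (fun s => (hψd s).differentiableAt) (fun s => (hψd s).deriv) t 0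
    rw [firstIntegral] at hc
    linarith [this]
  have hK : ∀ t, (1 - deriv f t ^ 2) ^ (-(n:ℝ)/2) = 1 + f t ^ n := by
    intro t; linarith [hψc t]
  -- zeros of f and f' coincide
  have hp0 : (-(n:ℝ)/2) ≠ 0 := by
    simp only [ne_eq, div_eq_zero_iff, neg_eq_zero, Nat.cast_eq_zero]
    push_neg
    exact ⟨hn0, by norm_num⟩
  -- solve for 1 - f'^2 in terms of f
  have hsolve : ∀ t, 1 - deriv f t ^ 2 = (1 + f t ^ n) ^ (-(2:ℝ)/n) := by
    intro t
    have : ((1 - deriv f t ^ 2) ^ (-(n:ℝ)/2)) ^ (-(2:ℝ)/n) = 1 - deriv f t ^ 2 := by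
      rw [← Real.rpow_mul (hx t).le,
        show (-(n:ℝ)/2) * (-(2:ℝ)/n) = 1 by field_simp, Real.rpow_one]
    rw [← this, hK t]
  -- zeros of f and f' coincide
  have hA : ∀ t, f t = 0 ↔ deriv f t = 0 := by
    intro t
    constructor
    · intro h
      have h1 : 1 - deriv f t ^ 2 = 1 := by
        rw [hsolve t, h, zero_pow hn0, add_zero, Real.one_rpow]
      have h2 : deriv f t ^ 2 = 0 := by linarith
      exact pow_eq_zero_iff (by norm_num) |>.mp h2
    · intro h
      have h1 := hK t
      rw [h] at h1
      norm_num at h1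
      exact h1.1
  have hd0 : 0 < deriv f 0 := by
    rcases h0'.eq_or_lt with h | h
    · exfalso
      have := (hA 0).mpr h.symm
      linarith
    · exact h
  -- f' is never zero (Gronwall)
  have hdne : ∀ t, deriv f t ≠ 0 := by
    intro t1 ht1
    have hft1 : f t1 = 0 := (hA t1).mpr ht1
    set a := min t1 0 with hadef
    set b := max t1 0 with hbdef
    obtain ⟨M0, hM0⟩ := (isCompact_Icc (a := a) (b := b)).exists_bound_of_continuousOn
      hcf.continuousOn
    have hM1 : (1:ℝ) ≤ max M0 1 := le_max_right _ _
    have hM : ∀ s ∈ Set.Icc a b, |f s| ≤ max M0 1 := fun s hs =>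
      le_trans (hM0 s hs) (le_max_left _ _)
    have hdE : ∀ s ∈ Set.Icc a b, HasDerivAt (fun t => f t ^ 2 + deriv f t ^ 2)
        (2 * f s * deriv f s + 2 * deriv f s * deriv (deriv f) s) s := by
      intro s _
      have := ((hDf s).pow 2).add ((hDd s).pow 2)
      simp at this; exact this
    have hbE : ∀ s ∈ Set.Icc a b, |2 * f s * deriv f s + 2 * deriv f s * deriv (deriv f) s|
        ≤ (1 + (max M0 1) ^ n) * |f s ^ 2 + deriv f s ^ 2| := by
      intro s hs
      have hE0 : (0:ℝ) ≤ f s ^ 2 + deriv f s ^ 2 := by positivity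
      rw [abs_of_nonneg hE0]
      have hA1 : (1 - deriv f s ^ 2) ^ ((n + 2 : ℝ) / 2) ≤ 1 :=
        Real.rpow_le_one (hx s).le (hx1 s) (by positivity)
      have hA0 : 0 < (1 - deriv f s ^ 2) ^ ((n + 2 : ℝ) / 2) :=
        Real.rpow_pos_of_pos (hx s) _
      have key1 : 2 * |f s| * |deriv f s| ≤ f s ^ 2 + deriv f s ^ 2 := by
        nlinarith [sq_nonneg (|f s| - |deriv f s|), sq_abs (f s), sq_abs (deriv f s)]
      have key2 : |f s| ^ (n - 1) ≤ (max M0 1) ^ (n - 2) * |f s| := by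
        rw [show n - 1 = (n - 2) + 1 by omega, pow_succ]
        exact mul_le_mul_of_nonneg_right
          (pow_le_pow_left₀ (abs_nonneg _) (hM s hs) _) (abs_nonneg _)
      have key3 : (max M0 1) ^ (n - 2) ≤ (max M0 1) ^ n := pow_le_pow_right₀ hM1 (by omega)
      have habs1 : |2 * f s * deriv f s| = 2 * |f s| * |deriv f s| := by
        rw [abs_mul, abs_mul, abs_two]
      have habs2 : |2 * deriv f s * (f s ^ (n - 1) * (1 - deriv f s ^ 2) ^ ((n + 2 : ℝ) / 2))|
          = 2 * |deriv f s| * (|f s| ^ (n - 1) * (1 - deriv f s ^ 2) ^ ((n + 2 : ℝ) / 2)) := by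
        rw [abs_mul, abs_mul, abs_mul, abs_two, abs_pow, abs_of_pos hA0]
      have step : |2 * f s * deriv f s + 2 * deriv f s * deriv (deriv f) s|
          ≤ 2 * |f s| * |deriv f s|
            + 2 * |deriv f s| * (|f s| ^ (n - 1) * (1 - deriv f s ^ 2) ^ ((n + 2 : ℝ) / 2)) := by
        rw [(hode s).2]
        calc |2 * f s * deriv f s
              + 2 * deriv f s * (f s ^ (n - 1) * (1 - deriv f s ^ 2) ^ ((n + 2 : ℝ) / 2))|
            ≤ |2 * f s * deriv f s|
              + |2 * deriv f s * (f s ^ (n - 1) * (1 - deriv f s ^ 2) ^ ((n + 2 : ℝ) / 2))| :=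
              abs_add_le _ _
          _ = _ := by rw [habs1, habs2]
      have step2 : 2 * |deriv f s| * (|f s| ^ (n - 1) * (1 - deriv f s ^ 2) ^ ((n + 2 : ℝ) / 2))
          ≤ (max M0 1) ^ (n - 2) * (2 * |f s| * |deriv f s|) := by
        have h1 : |f s| ^ (n - 1) * (1 - deriv f s ^ 2) ^ ((n + 2 : ℝ) / 2)
            ≤ |f s| ^ (n - 1) :=
          mul_le_of_le_one_right (pow_nonneg (abs_nonneg _) _) hA1
        calc 2 * |deriv f s| * (|f s| ^ (n - 1) * (1 - deriv f s ^ 2) ^ ((n + 2 : ℝ) / 2))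
            ≤ 2 * |deriv f s| * |f s| ^ (n - 1) :=
              mul_le_mul_of_nonneg_left h1 (by positivity)
          _ ≤ 2 * |deriv f s| * ((max M0 1) ^ (n - 2) * |f s|) :=
              mul_le_mul_of_nonneg_left key2 (by positivity)
          _ = (max M0 1) ^ (n - 2) * (2 * |f s| * |deriv f s|) := by ring
      have step3 : (max M0 1) ^ (n - 2) * (2 * |f s| * |deriv f s|)
          ≤ (max M0 1) ^ n * (f s ^ 2 + deriv f s ^ 2) := by
        calc (max M0 1) ^ (n - 2) * (2 * |f s| * |deriv f s|)
            ≤ (max M0 1) ^ (n - 2) * (f s ^ 2 + deriv f s ^ 2) :=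
              mul_le_mul_of_nonneg_left key1 (by positivity)
          _ ≤ (max M0 1) ^ n * (f s ^ 2 + deriv f s ^ 2) :=
              mul_le_mul_of_nonneg_right key3 hE0
      have hexp : (1 + (max M0 1) ^ n) * (f s ^ 2 + deriv f s ^ 2)
          = (f s ^ 2 + deriv f s ^ 2) + (max M0 1) ^ n * (f s ^ 2 + deriv f s ^ 2) := by ring
      rw [hexp]
      linarith [step, step2, step3, key1]
    have hE0pos : (0:ℝ) < f 0 ^ 2 + deriv f 0 ^ 2 := by
      nlinarith [sq_nonneg (deriv f 0), pow_pos h0 2]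
    have hEt1 : f t1 ^ 2 + deriv f t1 ^ 2 = 0 := by rw [hft1, ht1]; ring
    have h0mem : (0:ℝ) ∈ Set.Icc a b := ⟨min_le_right _ _, le_max_right _ _⟩
    rcases le_total t1 0 with h | h
    · have hamem : a = t1 := min_eq_left h
      have hz := gronwall_zero hdE hbE (by rw [hamem]; exact hEt1) 0 h0mem
      linarith
    · have hbmem : b = t1 := max_eq_left h
      have hz := gronwall_zero' hdE hbE (by rw [hbmem]; exact hEt1) 0 h0mem
      linarith
  -- f' > 0 everywhere
  have hdpos : ∀ t, 0 < deriv f t := by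
    intro t
    rcases (hdne t).lt_or_gt with h | h
    · exfalso
      obtain ⟨c, -, hcc⟩ := intermediate_value_uIcc (a := t) (b := 0)
        (f := deriv f) hcd.continuousOn
        (Set.mem_uIcc.mpr (Or.inl ⟨h.le, hd0.le⟩) :
          (0:ℝ) ∈ Set.uIcc (deriv f t) (deriv f 0))
      exact hdne c hcc
    · exact h
  -- f > 0 everywhere
  have hfne : ∀ t, f t ≠ 0 := fun t h => hdne t ((hA t).mp h)
  have hfpos : ∀ t, 0 < f t := by
    intro t
    rcases (hfne t).lt_or_gt with h | h
    · exfalso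
      obtain ⟨c, -, hcc⟩ := intermediate_value_uIcc (a := t) (b := 0)
        (f := f) hcf.continuousOn
        (Set.mem_uIcc.mpr (Or.inl ⟨h.le, h0.le⟩) : (0:ℝ) ∈ Set.uIcc (f t) (f 0))
      exact hfne c hcc
    · exact h
  -- monotone convergence at -∞
  have hmono : StrictMono f := strictMono_of_deriv_pos hdpos
  have hbdd : BddBelow (Set.range f) := ⟨0, by rintro y ⟨t, rfl⟩; exact (hfpos t).le⟩
  have hLlim : Tendsto f atBot (nhds (⨅ t, f t)) := tendsto_atBot_ciInf hmono.monotone hbdd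
  set L := ⨅ t, f t with hLdef
  have hL0 : 0 ≤ L := le_ciInf fun t => (hfpos t).le
  have hLle : ∀ t, L ≤ f t := fun t => ciInf_le hbdd t
  have hLzero : L = 0 := by
    by_contra hL
    have hLpos : 0 < L := hL0.lt_of_ne (Ne.symm hL)
    set c := (1 + L ^ n) ^ (-(2:ℝ)/n) with hcdef
    have h1Ln : 1 < 1 + L ^ n := by nlinarith [pow_pos hLpos n]
    have hcl : c < 1 := Real.rpow_lt_one_of_one_lt_of_neg h1Ln
      (div_neg_of_neg_of_pos (by norm_num) hnR)
    have hc0 : 0 ≤ c := (Real.rpow_pos_of_pos (by linarith) _).le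
    have hxc : ∀ t, 1 - deriv f t ^ 2 ≤ c := by
      intro t
      rw [hsolve t, hcdef]
      exact Real.rpow_le_rpow_of_nonpos (by linarith)
        (by have := pow_le_pow_left₀ hL0 (hLle t) n; linarith)
        (div_nonpos_of_nonpos_of_nonneg (by norm_num) hnR.le)
    set v := Real.sqrt (1 - c) with hvdef
    have hvpos : 0 < v := Real.sqrt_pos.mpr (by linarith)
    have hdlower : ∀ t, v ≤ deriv f t := by
      intro t
      rw [show deriv f t = Real.sqrt (deriv f t ^ 2) from (Real.sqrt_sq (hdpos t).le).symm,
        hvdef]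
      exact Real.sqrt_le_sqrt (by linarith [hxc t])
    have hG : ∀ t, HasDerivAt (fun t => f t - v * t) (deriv f t - v) t := by
      intro t
      have := (hDf t).sub ((hasDerivAt_id t).const_mul v)
      simp at this; exact this
    have hgm : Monotone (fun t => f t - v * t) :=
      monotone_of_deriv_nonneg (fun t => (hG t).differentiableAt)
        (fun t => by rw [(hG t).deriv]; linarith [hdlower t])
    have hTle : -(f 0 + 1)/v ≤ 0 :=
      div_nonpos_of_nonpos_of_nonneg (by linarith) hvpos.le
    have hgle := hgm hTle
    simp only [mul_zero, sub_zero] at hgle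
    have hvT : v * (-(f 0 + 1)/v) = -(f 0 + 1) := by field_simp
    nlinarith [hfpos (-(f 0 + 1)/v), hgle, hvT]
  have hTf : Tendsto f atBot (nhds 0) := hLzero ▸ hLlim
  -- limit of the derivative
  have hid : ∀ t, deriv f t = Real.sqrt (1 - (1 + f t ^ n) ^ (-(2:ℝ)/n)) := by
    intro t
    rw [← hsolve t, show (1:ℝ) - (1 - deriv f t ^ 2) = deriv f t ^ 2 by ring,
      Real.sqrt_sq (hdpos t).le]
  set G : ℝ → ℝ := fun y => Real.sqrt (1 - (1 + y ^ n) ^ (-(2:ℝ)/n)) with hGdef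
  have hG0 : G 0 = 0 := by
    simp [hGdef, zero_pow hn0, Real.one_rpow]
  have hcont : ContinuousAt G 0 := by
    apply Real.continuous_sqrt.continuousAt.comp
    have hbase : ContinuousAt (fun y : ℝ => 1 + y ^ n) 0 := by fun_prop
    exact continuousAt_const.sub (hbase.rpow_const (Or.inl (by simp [zero_pow hn0])))
  have hTd : Tendsto (deriv f) atBot (nhds 0) := by
    have h1 := hcont.tendsto.comp hTf
    rw [hG0] at h1
    exact h1.congr (fun t => (hid t).symm)
  exact ⟨hdpos, hTf, hTd⟩
end

section
/- For c < 1, the image of the gradient map ∇u_c : ℝⁿ → ℝⁿ equals the open unit ball B₁(0) = {y ∈ ℝⁿ : |y| < 1}. For c = 1, the image of ∇u_1 equals the open half-ball B₁⁺(0) = {y ∈ ℝⁿ : |y| < 1 and y₁ > 0}. -/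
open Real Filter

/-- `IsFc n c f` says that `f` is the normalized global spacelike solution `f_c`:
for `c < 1` it satisfies `f 0 = (1-c)^(1/n)`, `f' 0 = 0` (so its first integral is `c`);
for `c = 1` it satisfies `f 0 = 1`, `f' 0 = √(1 - 2^(-2/n))` (first integral `1`,
and `f` is strictly increasing). -/
def IsFc (n : ℕ) (c : ℝ) (f : ℝ → ℝ) : Prop :=
  IsGSS n f ∧
  (c < 1 → f 0 = (1 - c) ^ ((1 : ℝ) / n) ∧ deriv f 0 = 0) ∧
  (c = 1 → f 0 = 1 ∧ deriv f 0 = Real.sqrt (1 - (2 : ℝ) ^ (-(2 : ℝ) / n)))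

/-- The rotationally symmetric function `u_c(x) = √(f_c(x₁)² + |x̄|²)` on `ℝⁿ`
(written using `|x̄|² = ‖x‖² - x₁²`). -/
noncomputable def uC (n : ℕ) (f : ℝ → ℝ) (x : EuclideanSpace ℝ (Fin (n + 2))) : ℝ :=
  Real.sqrt (f (x 0) ^ 2 + ‖x‖ ^ 2 - (x 0) ^ 2)

section S9proofs
open Real Filter Set Topology

namespace S9

variable {m : ℕ} {c : ℝ} {f : ℝ → ℝ}

lemma wpos (hf : IsGSS m f) (t : ℝ) : 0 < 1 - deriv f t ^ 2 := by
  have h := abs_lt.1 (hf.2 t).1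
  nlinarith [h.1, h.2]

lemma wle (hf : IsGSS m f) (t : ℝ) : 1 - deriv f t ^ 2 ≤ 1 := by
  nlinarith [sq_nonneg (deriv f t)]

lemma hd1 (hf : IsGSS m f) (t : ℝ) : HasDerivAt f (deriv f t) t :=
  ((hf.1.differentiable (by norm_num)) t).hasDerivAt

lemma hC1' (hf : IsGSS m f) : ContDiff ℝ 1 (deriv f) := by
  have h2 : ContDiff ℝ ((1:ℕ)+1) f := by exact_mod_cast hf.1
  exact (contDiff_succ_iff_deriv.mp h2).2.2

lemma hd2 (hf : IsGSS m f) (t : ℝ) : HasDerivAt (deriv f) (deriv (deriv f) t) t :=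
  (((hC1' hf).differentiable (by norm_num)) t).hasDerivAt

lemma contf (hf : IsGSS m f) : Continuous f := hf.1.continuous

lemma contf' (hf : IsGSS m f) : Continuous (deriv f) := (hC1' hf).continuous

/-- first integral has derivative zero -/
lemma FI_hasDeriv (hf : IsGSS m f) (t : ℝ) :
    HasDerivAt (fun t => (1 - deriv f t ^ 2) ^ (-(m:ℝ)/2) - f t ^ m) 0 t := by
  have hw : HasDerivAt (fun t => 1 - deriv f t ^ 2)
      (-(2 * deriv f t * deriv (deriv f) t)) t := by
    have := ((hd2 hf t).pow 2).const_sub 1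
    refine this.congr_deriv (Eq.symm ?_)
    ring
  have h1 : HasDerivAt (fun t => (1 - deriv f t ^ 2) ^ (-(m:ℝ)/2))
      ((-(2 * deriv f t * deriv (deriv f) t)) * (-(m:ℝ)/2) *
        (1 - deriv f t ^ 2) ^ (-(m:ℝ)/2 - 1)) t :=
    hw.rpow_const (Or.inl (wpos hf t).ne')
  have h2 : HasDerivAt (fun t => f t ^ m) ((m:ℝ) * f t ^ (m-1) * deriv f t) t :=
    (hd1 hf t).pow m
  have := h1.sub h2
  refine this.congr_deriv (Eq.symm ?_)
  rw [(hf.2 t).2]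
  have hw0 : (0:ℝ) < 1 - deriv f t ^ 2 := wpos hf t
  have key : (1 - deriv f t ^ 2) ^ ((m + 2 : ℝ)/2) * (1 - deriv f t ^ 2) ^ (-(m:ℝ)/2 - 1)
      = 1 := by
    rw [← Real.rpow_add hw0]
    have he : ((m:ℝ) + 2)/2 + (-(m:ℝ)/2 - 1) = 0 := by ring
    rw [he, Real.rpow_zero]
  linear_combination (-(m:ℝ) * deriv f t * f t ^ (m-1)) * key


/-- the first integral identity -/
def FI (m : ℕ) (c : ℝ) (f : ℝ → ℝ) : Prop :=
  ∀ t : ℝ, (1 - deriv f t ^ 2) ^ (-(m:ℝ)/2) = c + f t ^ m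

lemma FI_of_value (hf : IsGSS m f)
    (h0 : (1 - deriv f 0 ^ 2) ^ (-(m:ℝ)/2) - f 0 ^ m = c) : FI m c f := by
  intro t
  have hconst : ∀ s : ℝ, (1 - deriv f s ^ 2) ^ (-(m:ℝ)/2) - f s ^ m
      = (1 - deriv f 0 ^ 2) ^ (-(m:ℝ)/2) - f 0 ^ m := by
    intro s
    exact is_const_of_deriv_eq_zero
      (fun x => (FI_hasDeriv hf x).differentiableAt)
      (fun x => (FI_hasDeriv hf x).deriv) s 0
  have := hconst t
  rw [h0] at this
  linarith

lemma FI.ge_one (hfi : FI m c f) (hf : IsGSS m f) (hm : 2 ≤ m) (t : ℝ) :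
    (1:ℝ) ≤ c + f t ^ m := by
  rw [← hfi t]
  rcases eq_or_lt_of_le (wle hf t) with h | h
  · rw [h, Real.one_rpow]
  · have hm0 : (0:ℝ) < m := by exact_mod_cast (by omega : 0 < m)
    exact le_of_lt ((Real.one_lt_rpow_iff_of_pos (wpos hf t)).2
      (Or.inr ⟨h, by linarith⟩))


/-- if f t = 0 then deriv f t = 0 (using first integral and c ≤ 1) -/
lemma deriv_eq_zero_of_eq_zero (hf : IsGSS m f) (hfi : FI m c f) (hm : 2 ≤ m)
    (hc : c ≤ 1) {t : ℝ} (ht : f t = 0) : deriv f t = 0 := by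
  have h1 := hfi t
  rw [ht] at h1
  rw [zero_pow (by omega : m ≠ 0), add_zero] at h1
  by_contra hne
  have hlt : 1 - deriv f t ^ 2 < 1 := by
    have : 0 < deriv f t ^ 2 := by positivity
    linarith
  have hm0 : (0:ℝ) < m := by exact_mod_cast (by omega : 0 < m)
  have hexp : -(m:ℝ)/2 < 0 := by linarith
  have h2 : 1 < (1 - deriv f t ^ 2) ^ (-(m:ℝ)/2) :=
    (Real.one_lt_rpow_iff_of_pos (wpos hf t)).2 (Or.inr ⟨hlt, hexp⟩)
  linarith

/-- main positivity lemma on [0, ∞) -/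
lemma posOn (hf : IsGSS m f) (hfi : FI m c f) (hm : 2 ≤ m) (hc : c ≤ 1)
    (h0 : 0 < f 0) : ∀ a : ℝ, 0 ≤ a → 0 < f a := by
  by_contra hcon
  push_neg at hcon
  obtain ⟨a, ha0, ha⟩ := hcon
  -- there is a zero in [0, a]
  have hzero : ∃ t ∈ Icc (0:ℝ) a, f t = 0 := by
    have := intermediate_value_Icc' ha0 (contf hf).continuousOn
      (by constructor <;> linarith : (0:ℝ) ∈ Icc (f a) (f 0))
    obtain ⟨t, ht, hft⟩ := this
    exact ⟨t, ht, hft⟩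
  set S : Set ℝ := {t | f t = 0} ∩ Icc 0 a with hS
  have hSne : S.Nonempty := by
    obtain ⟨t, ht, hft⟩ := hzero
    exact ⟨t, hft, ht⟩
  have hSclosed : IsClosed S :=
    ((isClosed_singleton (x := (0:ℝ))).preimage (contf hf)).inter isClosed_Icc
  have hSbdd : BddBelow S := ⟨0, fun t ht => ht.2.1⟩
  set t0 := sInf S with ht0def
  have ht0S : t0 ∈ S := hSclosed.csInf_mem hSne hSbdd
  have hft0 : f t0 = 0 := ht0S.1
  have ht0a : t0 ∈ Icc (0:ℝ) a := ht0S.2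
  have ht0pos : 0 < t0 := by
    rcases lt_or_eq_of_le ht0a.1 with h | h
    · exact h
    · exfalso; rw [← h] at hft0; linarith
  -- f > 0 on [0, t0)
  have hpos : ∀ t ∈ Ico (0:ℝ) t0, 0 < f t := by
    intro t ht
    by_contra hle
    push_neg at hle
    rcases eq_or_lt_of_le hle with h | h
    · have : t ∈ S := ⟨h, ht.1, le_trans ht.2.le ht0a.2⟩
      have := csInf_le hSbdd this
      linarith [ht.2]
    · obtain ⟨s, hs, hfs⟩ := intermediate_value_Icc' ht.1 (contf hf).continuousOn
        (by constructor <;> linarith : (0:ℝ) ∈ Icc (f t) (f 0))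
      have : s ∈ S := ⟨hfs, hs.1, le_trans hs.2 (le_trans ht.2.le ht0a.2)⟩
      have := csInf_le hSbdd this
      linarith [lt_of_le_of_lt hs.2 ht.2]
  have hd0 : deriv f t0 = 0 := deriv_eq_zero_of_eq_zero hf hfi hm hc hft0
  -- f ≥ 0 on [0, t0]
  have hnn : ∀ t ∈ Icc (0:ℝ) t0, 0 ≤ f t := by
    intro t ht
    rcases eq_or_lt_of_le ht.2 with h | h
    · rw [h, hft0]
    · exact (hpos t ⟨ht.1, h⟩).le
  -- bound M with f'' ≤ M f on [0, t0]
  obtain ⟨B, hB⟩ : ∃ B : ℝ, ∀ t ∈ Icc (0:ℝ) t0, f t ≤ B := by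
    obtain ⟨x, -, hx⟩ := isCompact_Icc.exists_isMaxOn (nonempty_Icc.2 ht0pos.le)
      (contf hf).continuousOn
    exact ⟨f x, fun t ht => hx ht⟩
  set M : ℝ := max B 1 ^ (m - 2) with hMdef
  have hM1 : (1:ℝ) ≤ max B 1 := le_max_right _ _
  have hMpos : 0 < M := by positivity
  have hub : ∀ t ∈ Icc (0:ℝ) t0, deriv (deriv f) t ≤ M * f t := by
    intro t ht
    rw [(hf.2 t).2]
    have hwle : (1 - deriv f t ^ 2) ^ ((m + 2 : ℝ)/2) ≤ 1 :=
      Real.rpow_le_one (wpos hf t).le (wle hf t) (by positivity)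
    have hfnn := hnn t ht
    have h1 : f t ^ (m - 1) * (1 - deriv f t ^ 2) ^ ((m + 2 : ℝ)/2) ≤ f t ^ (m - 1) := by
      have : (0:ℝ) ≤ f t ^ (m-1) := by positivity
      nlinarith [Real.rpow_nonneg (wpos hf t).le ((m + 2 : ℝ)/2)]
    have h2 : f t ^ (m - 1) ≤ M * f t := by
      have hm1 : m - 1 = (m - 2) + 1 := by omega
      rw [hm1, pow_succ]
      have := pow_le_pow_left₀ hfnn (le_trans (hB t ht) (le_max_left B 1)) (m - 2)
      nlinarith
    linarith
  -- f' < 0 on [0, t0)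
  have hmono : StrictMonoOn (deriv f) (Icc 0 t0) := by
    apply strictMonoOn_of_deriv_pos (convex_Icc 0 t0) (contf' hf).continuousOn
    intro t ht
    rw [interior_Icc] at ht
    rw [(hf.2 t).2]
    have hft := hpos t ⟨ht.1.le, ht.2⟩
    exact mul_pos (pow_pos hft _) (Real.rpow_pos_of_pos (wpos hf t) _)
  have hneg : ∀ t ∈ Ico (0:ℝ) t0, deriv f t < 0 := by
    intro t ht
    have := hmono ⟨ht.1, ht.2.le⟩ (right_mem_Icc.2 ht0pos.le) ht.2
    rwa [hd0] at this
  -- h := f'^2 - M f^2 is monotone on [0,t0] and h t0 = 0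
  set h : ℝ → ℝ := fun t => deriv f t ^ 2 - M * f t ^ 2 with hhdef
  have hhd : ∀ t : ℝ, HasDerivAt h
      (2 * deriv f t * (deriv (deriv f) t - M * f t)) t := by
    intro t
    have := ((hd2 hf t).pow 2).sub (((hd1 hf t).pow 2).const_mul M)
    refine this.congr_deriv (Eq.symm ?_)
    simp
    ring
  have hhmono : MonotoneOn h (Icc 0 t0) := by
    apply monotoneOn_of_deriv_nonneg (convex_Icc 0 t0)
      (Continuous.continuousOn (((contf' hf).pow 2).sub (continuous_const.mul ((contf hf).pow 2))))
    · intro t ht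
      exact (hhd t).differentiableAt.differentiableWithinAt
    · intro t ht
      rw [interior_Icc] at ht
      show 0 ≤ deriv h t
      rw [(hhd t).deriv]
      have h1 := hneg t ⟨ht.1.le, ht.2⟩
      have h2 := hub t ⟨ht.1.le, ht.2.le⟩
      nlinarith
  have hhle : ∀ t ∈ Icc (0:ℝ) t0, h t ≤ 0 := by
    intro t ht
    have := hhmono ht (right_mem_Icc.2 ht0pos.le) ht.2
    have ht0v : h t0 = 0 := by
      simp only [hhdef, hd0, hft0]
      ring
    linarith
  -- derivative bound: f' ≥ -√M f on [0, t0)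
  have hkey : ∀ t ∈ Ico (0:ℝ) t0, -(Real.sqrt M * f t) ≤ deriv f t := by
    intro t ht
    have h1 := hhle t ⟨ht.1, ht.2.le⟩
    have h2 : deriv f t ^ 2 ≤ (Real.sqrt M * f t) ^ 2 := by
      have : Real.sqrt M ^ 2 = M := Real.sq_sqrt hMpos.le
      simp only [hhdef] at h1
      nlinarith
    nlinarith [hneg t ht, mul_nonneg (Real.sqrt_nonneg M) (hpos t ht).le]
  -- log f + √M t is monotone on [0, t0)
  set φ : ℝ → ℝ := fun t => Real.log (f t) + Real.sqrt M * t with hφdef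
  have hφmono : MonotoneOn φ (Ico 0 t0) := by
    apply monotoneOn_of_deriv_nonneg (convex_Ico 0 t0)
    · apply ContinuousOn.add
      · exact ContinuousOn.log (contf hf).continuousOn
          (fun t ht => (hpos t ht).ne')
      · exact (continuous_const.mul continuous_id).continuousOn
    · intro t ht
      rw [interior_Ico] at ht
      have hft : f t ≠ 0 := (hpos t ⟨ht.1.le, ht.2⟩).ne'
      exact (((hd1 hf t).log hft).add
        ((hasDerivAt_id t).const_mul (Real.sqrt M))).differentiableAt.differentiableWithinAt
    · intro t ht
      rw [interior_Ico] at ht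
      have htI : t ∈ Ico (0:ℝ) t0 := ⟨ht.1.le, ht.2⟩
      have hft : 0 < f t := hpos t htI
      have hder : HasDerivAt φ (deriv f t / f t + Real.sqrt M * 1) t :=
        ((hd1 hf t).log hft.ne').add ((hasDerivAt_id t).const_mul (Real.sqrt M))
      rw [hder.deriv]
      have := hkey t htI
      rw [mul_one]
      rw [div_add' _ _ _ hft.ne']
      apply div_nonneg _ hft.le
      nlinarith
  -- so f ≥ δ > 0 on [0, t0)
  set δ : ℝ := Real.exp (Real.log (f 0) - Real.sqrt M * t0) with hδdef
  have hδpos : 0 < δ := Real.exp_pos _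
  have hlb : ∀ t ∈ Ico (0:ℝ) t0, δ ≤ f t := by
    intro t ht
    have h1 : φ 0 ≤ φ t := hφmono (left_mem_Ico.2 ht0pos) ht ht.1
    simp only [hφdef, mul_zero, add_zero] at h1
    have h2 : Real.log (f 0) - Real.sqrt M * t0 ≤ Real.log (f t) := by
      have : Real.sqrt M * t ≤ Real.sqrt M * t0 :=
        mul_le_mul_of_nonneg_left ht.2.le (Real.sqrt_nonneg M)
      linarith
    calc δ ≤ Real.exp (Real.log (f t)) := Real.exp_le_exp.2 h2
    _ = f t := Real.exp_log (hpos t ht)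
  -- but f t0 = 0, contradiction by continuity
  have htend : Tendsto f (𝓝[<] t0) (𝓝 0) := by
    rw [← hft0]
    exact ((contf hf).tendsto t0).mono_left nhdsWithin_le_nhds
  have hev : ∀ᶠ t in 𝓝[<] t0, f t < δ :=
    htend.eventually (Filter.Tendsto.eventually_lt_const hδpos tendsto_id) |>.mono (fun x hx => hx)
  have hev2 : ∀ᶠ t in 𝓝[<] t0, t ∈ Ioo (0:ℝ) t0 :=
    Ioo_mem_nhdsLT_of_mem ⟨ht0pos, le_refl t0⟩
  obtain ⟨t, ht1, ht2⟩ := (hev.and hev2).exists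
  exact absurd (hlb t ⟨ht2.1.le, ht2.2⟩) (not_le.2 ht1)


lemma reflect_gss (hf : IsGSS m f) : IsGSS m (fun t => f (-t)) ∧
    (∀ t, deriv (fun t => f (-t)) t = -deriv f (-t)) := by
  have hd : ∀ t : ℝ, HasDerivAt (fun t : ℝ => f (-t)) (-deriv f (-t)) t := by
    intro t
    have := (hd1 hf (-t)).comp t (hasDerivAt_neg t)
    simpa [Function.comp_def] using this
  have hderiv : ∀ t, deriv (fun t : ℝ => f (-t)) t = -deriv f (-t) := fun t => (hd t).deriv
  have hdd : ∀ t : ℝ, HasDerivAt (fun s : ℝ => -deriv f (-s)) (deriv (deriv f) (-t)) t := by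
    intro t
    have := ((hd2 hf (-t)).comp t (hasDerivAt_neg t)).neg
    exact this.congr_deriv (by simp)
  have hderiv2 : ∀ t, deriv (deriv (fun t : ℝ => f (-t))) t = deriv (deriv f) (-t) := by
    intro t
    have heq : deriv (fun t : ℝ => f (-t)) = fun s : ℝ => -deriv f (-s) := funext hderiv
    rw [heq]
    exact (hdd t).deriv
  refine ⟨⟨hf.1.comp (contDiff_id.neg), ?_⟩, hderiv⟩
  intro t
  constructor
  · rw [hderiv, abs_neg]; exact (hf.2 (-t)).1
  · rw [hderiv2, hderiv, (hf.2 (-t)).2]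
    have hsq : (-deriv f (-t)) ^ 2 = deriv f (-t) ^ 2 := by ring
    rw [hsq]

lemma reflect_fi (hf : IsGSS m f) (hfi : FI m c f) : FI m c (fun t => f (-t)) := by
  intro t
  rw [(reflect_gss hf).2 t]
  have hsq : (-deriv f (-t)) ^ 2 = deriv f (-t) ^ 2 := by ring
  rw [hsq]
  exact hfi (-t)

lemma pos (hf : IsGSS m f) (hfi : FI m c f) (hm : 2 ≤ m) (hc : c ≤ 1)
    (h0 : 0 < f 0) : ∀ t, 0 < f t := by
  intro t
  rcases le_or_gt 0 t with h | h
  · exact posOn hf hfi hm hc h0 t h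
  · have := posOn (reflect_gss hf).1 (reflect_fi hf hfi) hm hc
      (by simpa using h0) (-t) (by linarith)
    simpa using this

lemma dd_pos (hf : IsGSS m f) (hpos : ∀ t, 0 < f t) (t : ℝ) :
    0 < deriv (deriv f) t := by
  rw [(hf.2 t).2]
  exact mul_pos (pow_pos (hpos t) _) (Real.rpow_pos_of_pos (wpos hf t) _)

lemma sup_deriv (hf : IsGSS m f) (hm : 2 ≤ m) (hpos : ∀ t, 0 < f t)
    (h0 : 0 ≤ deriv f 0) : ∀ y : ℝ, y < 1 → ∃ t, y < deriv f t := by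
  intro y hy
  by_contra hcon
  push_neg at hcon
  have hmono : Monotone (deriv f) :=
    monotone_of_deriv_nonneg ((hC1' hf).differentiable (by norm_num))
      (fun t => (dd_pos hf hpos t).le)
  have hy0 : 0 ≤ y := le_trans h0 (hcon 0)
  set δ : ℝ := 1 - y ^ 2 with hδdef
  have hδpos : 0 < δ := by nlinarith
  -- for t ≥ 0, w t ≥ δ
  have hwge : ∀ t : ℝ, 0 ≤ t → δ ≤ 1 - deriv f t ^ 2 := by
    intro t ht
    have h1 : 0 ≤ deriv f t := le_trans h0 (hmono ht)
    have h2 : deriv f t ≤ y := hcon t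
    nlinarith
  -- f increasing on [0, ∞)
  have hfm : MonotoneOn f (Ici (0:ℝ)) := by
    apply monotoneOn_of_deriv_nonneg (convex_Ici 0) (contf hf).continuousOn
    · exact fun t _ => ((hd1 hf t).differentiableAt).differentiableWithinAt
    · intro t ht
      rw [interior_Ici] at ht
      rw [(hd1 hf t).deriv]
      exact le_trans h0 (hmono (le_of_lt ht))
  set ε : ℝ := f 0 ^ (m - 1) * δ ^ ((m + 2 : ℝ)/2) with hεdef
  have hεpos : 0 < ε := mul_pos (pow_pos (hpos 0) _) (Real.rpow_pos_of_pos hδpos _)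
  have hddge : ∀ t : ℝ, 0 ≤ t → ε ≤ deriv (deriv f) t := by
    intro t ht
    rw [(hf.2 t).2]
    have h1 : f 0 ^ (m - 1) ≤ f t ^ (m - 1) :=
      pow_le_pow_left₀ (hpos 0).le (hfm self_mem_Ici ht ht) _
    have h2 : δ ^ ((m + 2 : ℝ)/2) ≤ (1 - deriv f t ^ 2) ^ ((m + 2 : ℝ)/2) :=
      Real.rpow_le_rpow hδpos.le (hwge t ht) (by positivity)
    have h3 : (0:ℝ) ≤ δ ^ ((m + 2 : ℝ)/2) := (Real.rpow_pos_of_pos hδpos _).le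
    nlinarith [pow_pos (hpos 0) (m-1)]
  -- hence f' grows linearly
  have hgrow : MonotoneOn (fun t => deriv f t - ε * t) (Ici (0:ℝ)) := by
    apply monotoneOn_of_deriv_nonneg (convex_Ici 0)
      (((contf' hf).sub (continuous_const.mul continuous_id)).continuousOn)
    · exact fun t _ => (((hd2 hf t).sub
        ((hasDerivAt_id t).const_mul ε)).differentiableAt).differentiableWithinAt
    · intro t ht
      rw [interior_Ici] at ht
      have hder : HasDerivAt (fun t => deriv f t - ε * t) (deriv (deriv f) t - ε * 1) t :=
        (hd2 hf t).sub ((hasDerivAt_id t).const_mul ε)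
      show 0 ≤ deriv (fun t => deriv f t - ε * t) t
      rw [hder.deriv]
      have := hddge t ht.le
      simp only [mul_one]
      linarith
  set T : ℝ := 2 / ε with hTdef
  have hT0 : 0 ≤ T := by positivity
  have := hgrow self_mem_Ici (mem_Ici.2 hT0) hT0
  simp only [mul_zero, sub_zero] at this
  have hεT : ε * T = 2 := by
    rw [hTdef]; field_simp
  have habs := abs_lt.1 (hf.2 T).1
  linarith
  
lemma inf_deriv (hf : IsGSS m f) (hpos : ∀ t, 0 < f t) :
    ∀ ε : ℝ, 0 < ε → ∃ t, deriv f t < ε := by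
  intro ε hε
  by_contra hcon
  push_neg at hcon
  have hmono : Monotone (fun t => f t - ε * t) := by
    apply monotone_of_deriv_nonneg
    · exact fun t => ((hd1 hf t).sub ((hasDerivAt_id t).const_mul ε)).differentiableAt
    · intro t
      have hder : HasDerivAt (fun t => f t - ε * t) (deriv f t - ε * 1) t :=
        (hd1 hf t).sub ((hasDerivAt_id t).const_mul ε)
      show 0 ≤ deriv (fun t => f t - ε * t) t
      rw [hder.deriv]
      have := hcon t
      simp only [mul_one]
      linarith
  set t : ℝ := -(f 0 + 1)/ε with htdef
  have ht0 : t ≤ 0 := by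
    rw [htdef]
    apply div_nonpos_of_nonpos_of_nonneg _ hε.le
    have := hpos 0
    linarith
  have h1 := hmono ht0
  simp only [mul_zero, sub_zero] at h1
  have hεt : ε * t = -(f 0 + 1) := by
    rw [htdef]; field_simp
  have := hpos t
  linarith

lemma deriv_pos_of_fi_one (hf : IsGSS m f) (hfi : FI m 1 f) (hm : 2 ≤ m)
    (hpos : ∀ t, 0 < f t) (h0 : 0 < deriv f 0) : ∀ t, 0 < deriv f t := by
  have hnz : ∀ s, deriv f s ≠ 0 := by
    intro s hs
    have h1 := hfi s
    rw [hs] at h1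
    simp only [ne_eq, OfNat.ofNat_ne_zero, not_false_eq_true, zero_pow, sub_zero,
      Real.one_rpow] at h1
    have h2 : f s ^ m = 0 := by linarith
    exact absurd h2 (pow_pos (hpos s) m).ne'
  intro t
  rcases lt_trichotomy (deriv f t) 0 with h | h | h
  · exfalso
    have : (0:ℝ) ∈ uIcc (deriv f t) (deriv f 0) := by
      rw [mem_uIcc]; left; exact ⟨h.le, h0.le⟩
    obtain ⟨s, _, hs⟩ := intermediate_value_uIcc (contf' hf).continuousOn this
    exact hnz s hs
  · exact absurd h (hnz t)
  · exact h


lemma main_lt (hm : 2 ≤ m) (hclt : c < 1) (hf : IsGSS m f)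
    (h0 : f 0 = (1 - c) ^ ((1:ℝ)/m)) (h0' : deriv f 0 = 0) :
    (∀ t, 0 < f t) ∧ (∀ v ∈ Ioo (-1:ℝ) 1, ∃ s, deriv f s = v) := by
  have hm0 : (m:ℝ) ≠ 0 := by
    have : (0:ℝ) < m := by exact_mod_cast (by omega : 0 < m)
    linarith
  have h1c : (0:ℝ) < 1 - c := by linarith
  have hf0 : 0 < f 0 := by
    rw [h0]; exact Real.rpow_pos_of_pos h1c _
  have hfi : FI m c f := by
    apply FI_of_value hf
    rw [h0', h0]
    have h2 : ((1 - c) ^ ((1:ℝ)/m)) ^ m = 1 - c := by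
      rw [one_div]
      exact Real.rpow_inv_natCast_pow h1c.le (by omega)
    rw [h2]
    norm_num
  have hpos : ∀ t, 0 < f t := pos hf hfi hm hclt.le hf0
  refine ⟨hpos, ?_⟩
  intro v hv
  obtain ⟨t1, ht1⟩ := sup_deriv hf hm hpos (by rw [h0']) v hv.2
  have hrg := reflect_gss hf
  obtain ⟨t2, ht2⟩ := sup_deriv hrg.1 hm (fun t => hpos (-t))
    (by rw [hrg.2 0]; simp [h0']) (-v) (by linarith [hv.1])
  rw [hrg.2 t2] at ht2
  have ht2' : deriv f (-t2) < v := by linarith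
  have hmem : v ∈ uIcc (deriv f (-t2)) (deriv f t1) := by
    rw [mem_uIcc]; left; exact ⟨ht2'.le, ht1.le⟩
  obtain ⟨s, _, hs⟩ := intermediate_value_uIcc (contf' hf).continuousOn hmem
  exact ⟨s, hs⟩

lemma main_one (hm : 2 ≤ m) (hf : IsGSS m f) (h0 : f 0 = 1)
    (h0' : deriv f 0 = Real.sqrt (1 - (2:ℝ) ^ (-(2:ℝ)/m))) :
    (∀ t, 0 < f t) ∧ (∀ t, 0 < deriv f t) ∧
      (∀ v ∈ Ioo (0:ℝ) 1, ∃ s, deriv f s = v) := by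
  have hmR : (0:ℝ) < m := by exact_mod_cast (by omega : 0 < m)
  have hexp : -(2:ℝ)/m < 0 := div_neg_of_neg_of_pos (by norm_num) hmR
  have h2lt : (2:ℝ) ^ (-(2:ℝ)/m) < 1 :=
    Real.rpow_lt_one_of_one_lt_of_neg one_lt_two hexp
  have h2pos : (0:ℝ) < (2:ℝ) ^ (-(2:ℝ)/m) := Real.rpow_pos_of_pos two_pos _
  have hd0sq : deriv f 0 ^ 2 = 1 - (2:ℝ) ^ (-(2:ℝ)/m) := by
    rw [h0', Real.sq_sqrt (by linarith)]
  have hd0pos : 0 < deriv f 0 := by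
    rw [h0']; exact Real.sqrt_pos.2 (by linarith)
  have hfi : FI m 1 f := by
    apply FI_of_value hf
    rw [hd0sq, h0]
    have h3 : 1 - (1 - (2:ℝ) ^ (-(2:ℝ)/m)) = (2:ℝ) ^ (-(2:ℝ)/m) := by ring
    rw [h3, ← Real.rpow_mul (by norm_num : (0:ℝ) ≤ 2)]
    have h4 : -(2:ℝ)/m * (-(m:ℝ)/2) = 1 := by field_simp
    rw [h4, Real.rpow_one, one_pow]
    norm_num
  have hpos : ∀ t, 0 < f t := pos hf hfi hm le_rfl (by rw [h0]; norm_num)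
  have hdpos := deriv_pos_of_fi_one hf hfi hm hpos hd0pos
  refine ⟨hpos, hdpos, ?_⟩
  intro v hv
  obtain ⟨t1, ht1⟩ := sup_deriv hf hm hpos hd0pos.le v hv.2
  obtain ⟨t2, ht2⟩ := inf_deriv hf hpos v hv.1
  have hmem : v ∈ uIcc (deriv f t2) (deriv f t1) := by
    rw [mem_uIcc]; left; exact ⟨ht2.le, ht1.le⟩
  obtain ⟨s, _, hs⟩ := intermediate_value_uIcc (contf' hf).continuousOn hmem
  exact ⟨s, hs⟩


noncomputable def Gmap (n : ℕ) (f : ℝ → ℝ) (x : EuclideanSpace ℝ (Fin (n+2))) :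
    EuclideanSpace ℝ (Fin (n+2)) :=
  (Real.sqrt (f (x 0) ^ 2 + ‖x‖ ^ 2 - (x 0) ^ 2))⁻¹ •
    (x + (f (x 0) * deriv f (x 0) - x 0) • EuclideanSpace.single 0 1)

variable {n : ℕ}

lemma norm_sq_eq (x : EuclideanSpace ℝ (Fin (n+2))) : ‖x‖^2 = ∑ i, x i ^ 2 := by
  rw [EuclideanSpace.norm_eq, Real.sq_sqrt (by positivity)]
  congr 1; ext i; rw [Real.norm_eq_abs, sq_abs]

lemma norm_sq_split (x : EuclideanSpace ℝ (Fin (n+2))) :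
    ‖x‖^2 = x 0 ^ 2 + ∑ i : Fin (n+1), x i.succ ^ 2 := by
  rw [norm_sq_eq]; exact Fin.sum_univ_succ _

lemma gpos (hpos : ∀ t, 0 < f t) (x : EuclideanSpace ℝ (Fin (n+2))) :
    0 < f (x 0) ^ 2 + ‖x‖ ^ 2 - (x 0) ^ 2 := by
  have h1 := norm_sq_split x
  have h2 : 0 ≤ ∑ i : Fin (n+1), x i.succ ^2 := by positivity
  have := hpos (x 0)
  nlinarith

lemma hasGradient (hdf : ∀ t, HasDerivAt f (deriv f t) t) (hpos : ∀ t, 0 < f t)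
    (x : EuclideanSpace ℝ (Fin (n+2))) :
    HasGradientAt (uC n f) (Gmap n f x) x := by
  set u : ℝ := Real.sqrt (f (x 0) ^ 2 + ‖x‖ ^ 2 - (x 0) ^ 2) with hu
  have hgx : 0 < f (x 0) ^ 2 + ‖x‖ ^ 2 - (x 0) ^ 2 := gpos hpos x
  have hupos : 0 < u := Real.sqrt_pos.2 hgx
  have hproj : HasFDerivAt (fun y : EuclideanSpace ℝ (Fin (n+2)) => (y 0 : ℝ))
      (EuclideanSpace.proj (𝕜 := ℝ) (0 : Fin (n+2))) x :=
    ContinuousLinearMap.hasFDerivAt (EuclideanSpace.proj (𝕜 := ℝ) (0 : Fin (n+2)))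
  have h1 : HasFDerivAt (fun y : EuclideanSpace ℝ (Fin (n+2)) => f (y 0) ^ 2)
      ((2 * f (x 0) ^ 1 * deriv f (x 0)) • EuclideanSpace.proj (𝕜 := ℝ) (0 : Fin (n+2))) x := by
    have hd : HasDerivAt (fun t => f t ^ 2) (2 * f (x 0) ^ 1 * deriv f (x 0)) (x 0) := by
      have := (hdf (x 0)).pow 2
      norm_num at this ⊢
      exact this
    exact hd.comp_hasFDerivAt x hproj
  have h2 : HasFDerivAt (fun y : EuclideanSpace ℝ (Fin (n+2)) => ‖y‖ ^ 2)
      (2 • (innerSL ℝ x)) x := (hasStrictFDerivAt_norm_sq x).hasFDerivAt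
  have h3 : HasFDerivAt (fun y : EuclideanSpace ℝ (Fin (n+2)) => (y 0) ^ 2)
      ((2 * x 0 ^ 1) • EuclideanSpace.proj (𝕜 := ℝ) (0 : Fin (n+2))) x :=
    by have := (hasDerivAt_pow 2 (x 0)).comp_hasFDerivAt x hproj; exact this.congr_fderiv (by norm_num)
  have hg : HasFDerivAt (fun y : EuclideanSpace ℝ (Fin (n+2)) =>
      f (y 0) ^ 2 + ‖y‖ ^ 2 - (y 0) ^ 2)
      ((2 * f (x 0) ^ 1 * deriv f (x 0)) • EuclideanSpace.proj (𝕜 := ℝ) (0 : Fin (n+2))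
        + 2 • (innerSL ℝ x)
        - (2 * x 0 ^ 1) • EuclideanSpace.proj (𝕜 := ℝ) (0 : Fin (n+2))) x :=
    (h1.add h2).sub h3
  have hs : HasDerivAt Real.sqrt (1 / (2 * u)) (f (x 0) ^ 2 + ‖x‖ ^ 2 - (x 0) ^ 2) :=
    Real.hasDerivAt_sqrt hgx.ne'
  have hcomp := hs.comp_hasFDerivAt x hg
  rw [hasGradientAt_iff_hasFDerivAt]
  refine hcomp.congr_fderiv (Eq.symm ?_)
  apply ContinuousLinearMap.ext
  intro y
  rw [InnerProductSpace.toDual_apply_apply]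
  simp only [Gmap, ContinuousLinearMap.smul_apply, ContinuousLinearMap.sub_apply,
    ContinuousLinearMap.add_apply, PiLp.proj_apply, innerSL_apply_apply]
  rw [real_inner_smul_left, inner_add_left, real_inner_smul_left,
    EuclideanSpace.inner_single_left]
  simp only [map_one, one_mul, smul_eq_mul, two_smul]
  rw [← hu]
  field_simp
  ring

lemma gradient_uC_eq (hdf : ∀ t, HasDerivAt f (deriv f t) t) (hpos : ∀ t, 0 < f t) :
    gradient (uC n f) = Gmap n f :=
  gradient_eq (fun x => hasGradient hdf hpos x)


lemma Gmap_apply_zero (x : EuclideanSpace ℝ (Fin (n+2))) :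
    Gmap n f x 0 = (Real.sqrt (f (x 0) ^ 2 + ‖x‖ ^ 2 - (x 0) ^ 2))⁻¹ *
      (f (x 0) * deriv f (x 0)) := by
  simp only [Gmap, PiLp.smul_apply, PiLp.add_apply, EuclideanSpace.single_apply,
    smul_eq_mul]
  norm_num

lemma Gmap_apply_succ (x : EuclideanSpace ℝ (Fin (n+2))) (i : Fin (n+1)) :
    Gmap n f x i.succ = (Real.sqrt (f (x 0) ^ 2 + ‖x‖ ^ 2 - (x 0) ^ 2))⁻¹ * x i.succ := by
  simp only [Gmap, PiLp.smul_apply, PiLp.add_apply, EuclideanSpace.single_apply,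
    smul_eq_mul]
  rw [if_neg (Fin.succ_ne_zero i)]
  ring

lemma Gmap_norm_sq (hpos : ∀ t, 0 < f t) (x : EuclideanSpace ℝ (Fin (n+2))) :
    ‖Gmap n f x‖ ^ 2 = 1 - f (x 0) ^ 2 * (1 - deriv f (x 0) ^ 2) /
      (f (x 0) ^ 2 + ‖x‖ ^ 2 - (x 0) ^ 2) := by
  have hgx : 0 < f (x 0) ^ 2 + ‖x‖ ^ 2 - (x 0) ^ 2 := gpos hpos x
  have husq : Real.sqrt (f (x 0) ^ 2 + ‖x‖ ^ 2 - (x 0) ^ 2) ^ 2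
      = f (x 0) ^ 2 + ‖x‖ ^ 2 - (x 0) ^ 2 := Real.sq_sqrt hgx.le
  have hupos : 0 < Real.sqrt (f (x 0) ^ 2 + ‖x‖ ^ 2 - (x 0) ^ 2) := Real.sqrt_pos.2 hgx
  have h1 : ‖Gmap n f x‖^2 = (Gmap n f x 0) ^ 2 + ∑ i : Fin (n+1), (Gmap n f x i.succ) ^ 2 :=
    norm_sq_split _
  have h2 : ∑ i : Fin (n+1), (Gmap n f x i.succ) ^ 2
      = (Real.sqrt (f (x 0) ^ 2 + ‖x‖ ^ 2 - (x 0) ^ 2))⁻¹ ^ 2 *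
        ∑ i : Fin (n+1), (x i.succ) ^ 2 := by
    rw [Finset.mul_sum]
    congr 1
    ext i
    rw [Gmap_apply_succ]
    ring
  have h3 : ∑ i : Fin (n+1), (x i.succ) ^ 2 = ‖x‖^2 - (x 0)^2 := by
    have := norm_sq_split x
    linarith
  rw [h1, Gmap_apply_zero, h2, h3]
  rw [show ((Real.sqrt (f (x 0) ^ 2 + ‖x‖ ^ 2 - (x 0) ^ 2))⁻¹)^2
      = (f (x 0) ^ 2 + ‖x‖ ^ 2 - (x 0) ^ 2)⁻¹ by rw [inv_pow, husq]]
  field_simp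
  rw [husq]
  ring

lemma Gmap_norm_lt (hpos : ∀ t, 0 < f t) (habs : ∀ t, |deriv f t| < 1)
    (x : EuclideanSpace ℝ (Fin (n+2))) : ‖Gmap n f x‖ < 1 := by
  have hgx : 0 < f (x 0) ^ 2 + ‖x‖ ^ 2 - (x 0) ^ 2 := gpos hpos x
  have h1 := Gmap_norm_sq hpos x
  have h2 : deriv f (x 0) ^ 2 < 1 := by
    have := abs_lt.1 (habs (x 0))
    nlinarith [this.1, this.2]
  have h3 : 0 < f (x 0) ^ 2 * (1 - deriv f (x 0) ^ 2) /
      (f (x 0) ^ 2 + ‖x‖ ^ 2 - (x 0) ^ 2) := by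
    apply div_pos _ hgx
    exact mul_pos (pow_pos (hpos _) 2) (by linarith)
  nlinarith [norm_nonneg (Gmap n f x)]

lemma Gmap_surj_aux (hpos : ∀ t, 0 < f t) (y : EuclideanSpace ℝ (Fin (n+2)))
    (hy : ‖y‖ < 1) (s : ℝ)
    (hs : deriv f s = y 0 / Real.sqrt (1 - (‖y‖^2 - (y 0)^2))) :
    ∃ x, Gmap n f x = y := by
  set r2 : ℝ := ‖y‖^2 - (y 0)^2 with hr2
  have hr2nn : 0 ≤ r2 := by
    have := norm_sq_split y
    have h2 : 0 ≤ ∑ i : Fin (n+1), y i.succ ^2 := by positivity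
    rw [hr2]; linarith
  have hylt : ‖y‖^2 < 1 := by nlinarith [norm_nonneg y]
  have hr2lt : r2 < 1 := by rw [hr2]; nlinarith [sq_nonneg (y 0)]
  set k : ℝ := Real.sqrt (1 - r2) with hk
  have hkpos : 0 < k := Real.sqrt_pos.2 (by linarith)
  have hksq : k ^ 2 = 1 - r2 := Real.sq_sqrt (by linarith)
  set x : EuclideanSpace ℝ (Fin (n+2)) :=
    (f s / k) • y + (s - (f s / k) * y 0) • EuclideanSpace.single 0 1 with hx
  have hx0 : x 0 = s := by
    simp only [hx, PiLp.smul_apply, PiLp.add_apply, EuclideanSpace.single_apply,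
      smul_eq_mul]
    norm_num
  have hxsucc : ∀ i : Fin (n+1), x i.succ = (f s / k) * y i.succ := by
    intro i
    simp only [hx, PiLp.smul_apply, PiLp.add_apply, EuclideanSpace.single_apply,
      smul_eq_mul]
    rw [if_neg (Fin.succ_ne_zero i)]
    ring
  have hfs : 0 < f s := hpos s
  have hgx : f (x 0) ^ 2 + ‖x‖ ^ 2 - (x 0) ^ 2 = (f s / k) ^ 2 := by
    have h1 : ‖x‖^2 = x 0 ^2 + ∑ i : Fin (n+1), x i.succ ^2 := norm_sq_split x
    have h2 : ∑ i : Fin (n+1), x i.succ ^2 = (f s / k)^2 * r2 := by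
      have h3 : ∑ i : Fin (n+1), x i.succ ^2 = ∑ i : Fin (n+1), (f s / k)^2 * y i.succ ^2 := by
        congr 1; ext i; rw [hxsucc i]; ring
      have h4 : ∑ i : Fin (n+1), y i.succ ^2 = r2 := by
        have := norm_sq_split y
        rw [hr2]; linarith
      rw [h3, ← Finset.mul_sum, h4]
    rw [h1, hx0, h2]
    have : (f s / k)^2 * (k^2 + r2) = (f s)^2 + (f s/k)^2 * r2 := by
      field_simp
    rw [hksq] at this
    nlinarith [this]
  have hu : Real.sqrt (f (x 0) ^ 2 + ‖x‖ ^ 2 - (x 0) ^ 2) = f s / k := by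
    rw [hgx]
    exact Real.sqrt_sq (by positivity)
  refine ⟨x, ?_⟩
  have hds : deriv f (x 0) = y 0 / k := by rw [hx0, hs]
  apply PiLp.ext
  intro j
  refine Fin.cases ?_ ?_ j
  · rw [Gmap_apply_zero, hu, hx0, hs]
    field_simp
  · intro i
    rw [Gmap_apply_succ, hu, hxsucc i]
    field_simp

lemma Gmap_zero_pos (hpos : ∀ t, 0 < f t) (hdpos : ∀ t, 0 < deriv f t)
    (x : EuclideanSpace ℝ (Fin (n+2))) : 0 < Gmap n f x 0 := by
  rw [Gmap_apply_zero]
  have h := Real.sqrt_pos.2 (gpos hpos x)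
  exact mul_pos (inv_pos.2 h) (mul_pos (hpos _) (hdpos _))

theorem range_lt (hdf : ∀ t, HasDerivAt f (deriv f t) t) (hpos : ∀ t, 0 < f t)
    (habs : ∀ t, |deriv f t| < 1)
    (hsurj : ∀ v : ℝ, -1 < v → v < 1 → ∃ s, deriv f s = v) :
    Set.range (gradient (uC n f)) = Metric.ball (0 : EuclideanSpace ℝ (Fin (n+2))) 1 := by
  rw [gradient_uC_eq hdf hpos]
  ext y
  simp only [Set.mem_range, Metric.mem_ball, dist_zero_right]
  constructor
  · rintro ⟨x, rfl⟩
    exact Gmap_norm_lt hpos habs x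
  · intro hy
    have hylt : ‖y‖^2 < 1 := by nlinarith [norm_nonneg y]
    have hr2nn : 0 ≤ ‖y‖^2 - (y 0)^2 := by
      have := norm_sq_split y
      have h2 : 0 ≤ ∑ i : Fin (n+1), y i.succ ^2 := by positivity
      linarith
    set k := Real.sqrt (1 - (‖y‖^2 - (y 0)^2)) with hk
    have hkpos : 0 < k := Real.sqrt_pos.2 (by nlinarith [sq_nonneg (y 0)])
    have hksq : k^2 = 1 - (‖y‖^2 - (y 0)^2) := Real.sq_sqrt (by nlinarith [sq_nonneg (y 0)])
    have hvlt : (y 0 / k)^2 < 1 := by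
      rw [div_pow, div_lt_one (by positivity), hksq]
      nlinarith
    have h1 : -1 < y 0 / k := by nlinarith [sq_nonneg (y 0 / k + 1)]
    have h2 : y 0 / k < 1 := by nlinarith [sq_nonneg (y 0 / k - 1)]
    obtain ⟨s, hs⟩ := hsurj (y 0 / k) h1 h2
    exact Gmap_surj_aux hpos y hy s (by rw [hs, hk])

theorem range_one (hdf : ∀ t, HasDerivAt f (deriv f t) t) (hpos : ∀ t, 0 < f t)
    (habs : ∀ t, |deriv f t| < 1) (hdpos : ∀ t, 0 < deriv f t)
    (hsurj : ∀ v : ℝ, 0 < v → v < 1 → ∃ s, deriv f s = v) :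
    Set.range (gradient (uC n f))
      = {y : EuclideanSpace ℝ (Fin (n + 2)) | ‖y‖ < 1 ∧ 0 < y 0} := by
  rw [gradient_uC_eq hdf hpos]
  ext y
  simp only [Set.mem_range, Set.mem_setOf_eq]
  constructor
  · rintro ⟨x, rfl⟩
    exact ⟨Gmap_norm_lt hpos habs x, Gmap_zero_pos hpos hdpos x⟩
  · rintro ⟨hy, hy0⟩
    have hylt : ‖y‖^2 < 1 := by nlinarith [norm_nonneg y]
    have hr2nn : 0 ≤ ‖y‖^2 - (y 0)^2 := by
      have := norm_sq_split y
      have h2 : 0 ≤ ∑ i : Fin (n+1), y i.succ ^2 := by positivity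
      linarith
    set k := Real.sqrt (1 - (‖y‖^2 - (y 0)^2)) with hk
    have hkpos : 0 < k := Real.sqrt_pos.2 (by nlinarith [sq_nonneg (y 0)])
    have hksq : k^2 = 1 - (‖y‖^2 - (y 0)^2) := Real.sq_sqrt (by nlinarith [sq_nonneg (y 0)])
    have hvlt : (y 0 / k)^2 < 1 := by
      rw [div_pow, div_lt_one (by positivity), hksq]
      nlinarith
    have h1 : 0 < y 0 / k := div_pos hy0 hkpos
    have h2 : y 0 / k < 1 := by nlinarith [sq_nonneg (y 0 / k - 1)]
    obtain ⟨s, hs⟩ := hsurj (y 0 / k) h1 h2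
    exact Gmap_surj_aux hpos y hy s (by rw [hs, hk])

end S9
end S9proofs

/-- the image of the gradient map `∇u_c : ℝⁿ → ℝⁿ` is the open unit
ball if `c < 1`, and the open half-ball `{|y| < 1, y₁ > 0}` if `c = 1`. -/
theorem stmt_9 (n : ℕ) (c : ℝ) (hc : c ≤ 1) (f : ℝ → ℝ) (hf : IsFc (n + 2) c f) :
    (c < 1 → Set.range (gradient (uC n f))
        = Metric.ball (0 : EuclideanSpace ℝ (Fin (n + 2))) 1) ∧
    (c = 1 → Set.range (gradient (uC n f))
        = {y : EuclideanSpace ℝ (Fin (n + 2)) | ‖y‖ < 1 ∧ 0 < y 0}) := by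
  have hgss : IsGSS (n + 2) f := hf.1
  have hm : 2 ≤ n + 2 := by omega
  have hdf : ∀ t, HasDerivAt f (deriv f t) t := S9.hd1 hgss
  have habs : ∀ t, |deriv f t| < 1 := fun t => (hgss.2 t).1
  constructor
  · intro hclt
    obtain ⟨h0, h0'⟩ := hf.2.1 hclt
    obtain ⟨hpos, hsurj⟩ := S9.main_lt hm hclt hgss h0 h0'
    exact S9.range_lt hdf hpos habs
      (fun v hv1 hv2 => hsurj v ⟨hv1, hv2⟩)
  · intro hceq
    obtain ⟨h0, h0'⟩ := hf.2.2 hceq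
    obtain ⟨hpos, hdpos, hsurj⟩ := S9.main_one hm hgss h0 h0'
    exact S9.range_one hdf hpos habs hdpos
      (fun v hv1 hv2 => hsurj v ⟨hv1, hv2⟩)
end
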